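/- arXiv:1504.04682 — 7 statements merged into one kernel-verified Lean document; each statement's English description precedes it below -/
import Mathlib

section
/- The functions F and G are classical solutions of the ordinary differential equation (σ²/2)·u''(x) + μ(θ − x)·u'(x) − r·u(x) = 0 for all x ∈ ℝ. -/
/-!
Write `I_p(b) = ∫₀^∞ u^p e^{bu - u²/2} du`. Differentiating under the integral sign gives
`I_p' = I_{p+1}`, and integrating `d/du (u^s e^{bu - u²/2})` over `(0, ∞)` gives the recurrence
`I_{s+1}(b) = s I_{s-1}(b) + b I_s(b)` for `s > 0`. Both `F` and `G` are `x ↦ I_{s-1}(k (x - θ))`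
with `s = r/μ` and `k = ±√(2μ/σ²)`, and for such a function the left side of the ODE is
`σ²k²/2 = μ` times that recurrence at `b = k (x - θ)`.
-/

open Real MeasureTheory Set Filter Topology

noncomputable def rpowGaussIntegral (p b : ℝ) : ℝ :=
  ∫ u in Ioi (0 : ℝ), u ^ p * exp (b * u - u ^ 2 / 2)

theorem continuousOn_rpow_mul_exp_gauss (p b : ℝ) :
    ContinuousOn (fun u : ℝ => u ^ p * exp (b * u - u ^ 2 / 2)) (Ioi 0) :=
  fun u hu => ((continuousAt_rpow_const u p (Or.inl (ne_of_gt hu))).mul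
    (by fun_prop)).continuousWithinAt

theorem integrableOn_rpow_mul_exp_gauss {p : ℝ} (hp : -1 < p) (b : ℝ) :
    IntegrableOn (fun u : ℝ => u ^ p * exp (b * u - u ^ 2 / 2)) (Ioi 0) := by
  refine ((integrableOn_rpow_mul_exp_neg_mul_sq (b := 1 / 4) (by norm_num) hp).const_mul
    (exp (b ^ 2))).mono' ((continuousOn_rpow_mul_exp_gauss p b).aestronglyMeasurable
      measurableSet_Ioi) ?_
  filter_upwards [ae_restrict_mem measurableSet_Ioi] with u (hu : 0 < u)
  rw [norm_of_nonneg (by positivity), mul_left_comm, ← exp_add]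
  gcongr
  nlinarith [sq_nonneg (u / 2 - b)]

theorem tendsto_rpow_mul_exp_gauss_atTop (p b : ℝ) :
    Tendsto (fun u : ℝ => u ^ p * exp (b * u - u ^ 2 / 2)) atTop (𝓝 0) := by
  refine squeeze_zero' ?_ ?_ (tendsto_rpow_mul_exp_neg_mul_atTop_nhds_zero p 1 one_pos)
  · filter_upwards [eventually_ge_atTop 0] with u hu
    positivity
  · filter_upwards [eventually_ge_atTop (max (2 * b + 2) 0)] with u hu
    have hu0 : 0 ≤ u := (le_max_right _ _).trans hu
    have hub : 2 * b + 2 ≤ u := (le_max_left _ _).trans hu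
    gcongr
    nlinarith

theorem hasDerivAt_rpowGaussIntegral {p : ℝ} (hp : -1 < p) (b₀ : ℝ) :
    HasDerivAt (rpowGaussIntegral p) (rpowGaussIntegral (p + 1) b₀) b₀ := by
  have hmeas : ∀ q b : ℝ, AEStronglyMeasurable (fun u : ℝ => u ^ q * exp (b * u - u ^ 2 / 2))
      (volume.restrict (Ioi 0)) :=
    fun q b => (continuousOn_rpow_mul_exp_gauss q b).aestronglyMeasurable measurableSet_Ioi
  have hbound : ∀ᵐ u ∂volume.restrict (Ioi (0 : ℝ)), ∀ b ∈ Metric.ball b₀ 1,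
      ‖u ^ (p + 1) * exp (b * u - u ^ 2 / 2)‖
        ≤ u ^ (p + 1) * exp ((|b₀| + 1) * u - u ^ 2 / 2) := by
    filter_upwards [ae_restrict_mem measurableSet_Ioi] with u (hu : 0 < u) b hb
    have hb' : b ≤ |b₀| + 1 := by
      rw [Metric.mem_ball, Real.dist_eq] at hb
      linarith [(abs_lt.1 hb).2, le_abs_self b₀]
    rw [norm_of_nonneg (by positivity)]
    gcongr
  have hderiv : ∀ᵐ u ∂volume.restrict (Ioi (0 : ℝ)), ∀ b ∈ Metric.ball b₀ 1,
      HasDerivAt (fun b => u ^ p * exp (b * u - u ^ 2 / 2))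
        (u ^ (p + 1) * exp (b * u - u ^ 2 / 2)) b := by
    filter_upwards [ae_restrict_mem measurableSet_Ioi] with u (hu : 0 < u) b _
    refine ((((hasDerivAt_id b).mul_const u).sub_const (u ^ 2 / 2)).exp.const_mul
      (u ^ p)).congr_deriv ?_
    rw [rpow_add_one hu.ne', id, one_mul]
    ring
  exact (hasDerivAt_integral_of_dominated_loc_of_deriv_le (Metric.ball_mem_nhds b₀ one_pos)
    (Eventually.of_forall (hmeas p)) (integrableOn_rpow_mul_exp_gauss hp b₀) (hmeas (p + 1) b₀)
    hbound (integrableOn_rpow_mul_exp_gauss (by linarith) _) hderiv).2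

theorem rpowGaussIntegral_add_one {s : ℝ} (hs : 0 < s) (b : ℝ) :
    rpowGaussIntegral (s + 1) b = s * rpowGaussIntegral (s - 1) b + b * rpowGaussIntegral s b := by
  set g : ℝ → ℝ → ℝ := fun q u => u ^ q * exp (b * u - u ^ 2 / 2) with hg
  have hint : ∀ q, -1 < q → IntegrableOn (g q) (Ioi 0) :=
    fun q hq => integrableOn_rpow_mul_exp_gauss hq b
  have hcont : ContinuousWithinAt (g s) (Ici 0) 0 :=
    ((continuousAt_rpow_const 0 s (Or.inr hs.le)).mul (by fun_prop)).continuousWithinAt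
  have hderiv : ∀ u ∈ Ioi (0 : ℝ),
      HasDerivAt (g s) (s * g (s - 1) u + b * g s u - g (s + 1) u) u := by
    intro u (hu : 0 < u)
    have hexp : HasDerivAt (fun u => b * u - u ^ 2 / 2) (b - u) u := by
      refine (((hasDerivAt_id u).const_mul b).fun_sub
        ((hasDerivAt_pow 2 u).div_const 2)).congr_deriv ?_
      norm_num
    refine ((hasDerivAt_rpow_const (Or.inl hu.ne')).fun_mul hexp.exp).congr_deriv ?_
    simp only [hg, rpow_add_one hu.ne']
    ring
  have h₁ : IntegrableOn (fun u => s * g (s - 1) u + b * g s u) (Ioi 0) :=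
    ((hint _ (by linarith)).const_mul s).add ((hint _ (by linarith)).const_mul b)
  have hFTC := integral_Ioi_of_hasDerivAt_of_tendsto hcont hderiv
    (h₁.sub (hint _ (by linarith))) (tendsto_rpow_mul_exp_gauss_atTop s b)
  rw [integral_sub h₁ (hint _ (by linarith)), integral_add ((hint _ (by linarith)).const_mul s)
    ((hint _ (by linarith)).const_mul b), integral_const_mul, integral_const_mul] at hFTC
  simp only [hg, zero_rpow hs.ne', zero_mul, sub_zero] at hFTC
  unfold rpowGaussIntegral
  linarith

theorem hasDerivAt_rpowGaussIntegral_comp_affine {p : ℝ} (hp : -1 < p) (k θ x : ℝ) :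
    HasDerivAt (fun x => rpowGaussIntegral p (k * (x - θ)))
      (k * rpowGaussIntegral (p + 1) (k * (x - θ))) x :=
  ((hasDerivAt_rpowGaussIntegral hp _).comp x
    (((hasDerivAt_id x).sub_const θ).const_mul k)).congr_deriv (by rw [id, mul_one, mul_comm])

theorem rpowGaussIntegral_comp_affine_ode {s : ℝ} (hs : 0 < s) (k θ : ℝ) {f : ℝ → ℝ}
    (hf : ∀ x, f x = rpowGaussIntegral (s - 1) (k * (x - θ))) :
    (∀ x, DifferentiableAt ℝ f x) ∧ (∀ x, DifferentiableAt ℝ (deriv f) x) ∧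
      ∀ x, deriv (deriv f) x + k ^ 2 * (θ - x) * deriv f x - k ^ 2 * s * f x = 0 := by
  obtain rfl : f = fun x => rpowGaussIntegral (s - 1) (k * (x - θ)) := funext hf
  have h₁ (x : ℝ) : HasDerivAt (fun x => rpowGaussIntegral (s - 1) (k * (x - θ)))
      (k * rpowGaussIntegral s (k * (x - θ))) x := by
    simpa only [sub_add_cancel] using
      hasDerivAt_rpowGaussIntegral_comp_affine (by linarith : -1 < s - 1) k θ x
  have hd : deriv (fun x => rpowGaussIntegral (s - 1) (k * (x - θ)))
      = fun x => k * rpowGaussIntegral s (k * (x - θ)) := funext fun x => (h₁ x).deriv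
  have h₂ (x : ℝ) : HasDerivAt (fun x => k * rpowGaussIntegral s (k * (x - θ)))
      (k * (k * rpowGaussIntegral (s + 1) (k * (x - θ)))) x :=
    (hasDerivAt_rpowGaussIntegral_comp_affine (by linarith) k θ x).const_mul k
  refine ⟨fun x => (h₁ x).differentiableAt, fun x => hd ▸ (h₂ x).differentiableAt, fun x => ?_⟩
  rw [hd, (h₂ x).deriv, rpowGaussIntegral_add_one hs]
  ring

theorem stmt1_general
    (μ σ θ r : ℝ)
    (hμ : 0 < μ) (hσ : 0 < σ) (hr : 0 < r)
    (F G : ℝ → ℝ)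
    (hF : ∀ x : ℝ, F x = ∫ u in Ioi (0:ℝ),
        u ^ (r / μ - 1) * Real.exp (Real.sqrt (2 * μ / σ ^ 2) * (x - θ) * u - u ^ 2 / 2))
    (hG : ∀ x : ℝ, G x = ∫ u in Ioi (0:ℝ),
        u ^ (r / μ - 1) * Real.exp (Real.sqrt (2 * μ / σ ^ 2) * (θ - x) * u - u ^ 2 / 2)) :
    (∀ x, DifferentiableAt ℝ F x) ∧ (∀ x, DifferentiableAt ℝ (deriv F) x) ∧
    (∀ x, DifferentiableAt ℝ G x) ∧ (∀ x, DifferentiableAt ℝ (deriv G) x) ∧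
    (∀ x : ℝ, σ ^ 2 / 2 * deriv (deriv F) x + μ * (θ - x) * deriv F x - r * F x = 0) ∧
    (∀ x : ℝ, σ ^ 2 / 2 * deriv (deriv G) x + μ * (θ - x) * deriv G x - r * G x = 0) := by
  set k := √(2 * μ / σ ^ 2)
  have hk : σ ^ 2 / 2 * k ^ 2 = μ := by
    rw [sq_sqrt (by positivity)]
    field_simp
  have hs : μ * (r / μ) = r := mul_div_cancel₀ r hμ.ne'
  have hscale {f : ℝ → ℝ}
      (hf : ∀ x, deriv (deriv f) x + k ^ 2 * (θ - x) * deriv f x - k ^ 2 * (r / μ) * f x = 0)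
      (x : ℝ) : σ ^ 2 / 2 * deriv (deriv f) x + μ * (θ - x) * deriv f x - r * f x = 0 := by
    linear_combination σ ^ 2 / 2 * hf x + (r / μ * f x - (θ - x) * deriv f x) * hk + f x * hs
  obtain ⟨hF₁, hF₂, hFode⟩ := rpowGaussIntegral_comp_affine_ode (div_pos hr hμ) k θ hF
  obtain ⟨hG₁, hG₂, hGode⟩ := rpowGaussIntegral_comp_affine_ode (div_pos hr hμ) (-k) θ
    (f := G) fun x => by rw [hG x, show -k * (x - θ) = k * (θ - x) by ring]; rfl
  rw [neg_sq] at hGode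
  exact ⟨hF₁, hF₂, hG₁, hG₂, hscale hFode, hscale hGode⟩

/-- F and G are classical solutions of
(σ²/2)·u''(x) + μ(θ − x)·u'(x) − r·u(x) = 0 on ℝ. -/
theorem stmt1
    (μ σ θ r c_s c_b : ℝ)
    (hμ : 0 < μ) (hσ : 0 < σ) (hr : 0 < r) (hcs : 0 < c_s) (hcb : 0 < c_b)
    (F G : ℝ → ℝ)
    (hF : ∀ x : ℝ, F x = ∫ u in Ioi (0:ℝ),
        u ^ (r / μ - 1) * Real.exp (Real.sqrt (2 * μ / σ ^ 2) * (x - θ) * u - u ^ 2 / 2))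
    (hG : ∀ x : ℝ, G x = ∫ u in Ioi (0:ℝ),
        u ^ (r / μ - 1) * Real.exp (Real.sqrt (2 * μ / σ ^ 2) * (θ - x) * u - u ^ 2 / 2)) :
    (∀ x, DifferentiableAt ℝ F x) ∧ (∀ x, DifferentiableAt ℝ (deriv F) x) ∧
    (∀ x, DifferentiableAt ℝ G x) ∧ (∀ x, DifferentiableAt ℝ (deriv G) x) ∧
    (∀ x : ℝ, σ ^ 2 / 2 * deriv (deriv F) x + μ * (θ - x) * deriv F x - r * F x = 0) ∧
    (∀ x : ℝ, σ ^ 2 / 2 * deriv (deriv G) x + μ * (θ - x) * deriv G x - r * G x = 0) :=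
  stmt1_general μ σ θ r hμ hσ hr F G hF hG
end

section
/- The function ψ(x) = F(x)/G(x) is strictly positive and strictly increasing on ℝ, ψ(x) → 0 as x → −∞, and ψ(x) → +∞ as x → +∞; consequently ψ is a continuous bijection from ℝ onto (0, +∞). -/
open Real MeasureTheory Set Filter

/-! `cylinderIntegral p a = ∫₀^∞ u^(p-1) e^(a u - u²/2) du = Γ(p) e^(a²/4) D₋ₚ(-a)`, with `D` the
parabolic cylinder function; the statement's `F` and `G` are `cylinderIntegral (r/μ)` at
`±√(2μ/σ²)(x - θ)`. On `(0, ∞)` the integrand is positive and strictly increasing in `a`, which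
gives positivity and strict monotonicity; dominated convergence gives continuity and the limit `0`
at `-∞`, and the bound `e^(a u) ≥ e^a` on `u ≥ 1` the growth at `+∞`. The ratio `F x / G x` of an
increasing and a decreasing positive function inherits all of this, and the intermediate value
theorem identifies its range. -/

theorem setIntegral_Ioi_pos {f : ℝ → ℝ} {c : ℝ} (hf : IntegrableOn f (Ioi c))
    (hpos : ∀ u ∈ Ioi c, 0 < f u) : 0 < ∫ u in Ioi c, f u := by
  have hnonneg : 0 ≤ᵐ[volume.restrict (Ioi c)] f :=
    (ae_restrict_iff' measurableSet_Ioi).2 (ae_of_all _ fun u hu => (hpos u hu).le)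
  have hsupport : Function.support f ∩ Ioi c = Ioi c :=
    inter_eq_self_of_subset_right fun u hu => (hpos u hu).ne'
  rw [setIntegral_pos_iff_support_of_nonneg_ae hnonneg hf, hsupport, volume_Ioi]
  exact ENNReal.zero_lt_top

noncomputable def cylinderIntegrand (p a u : ℝ) : ℝ := u ^ (p - 1) * exp (a * u - u ^ 2 / 2)

noncomputable def cylinderIntegral (p a : ℝ) : ℝ := ∫ u in Ioi (0:ℝ), cylinderIntegrand p a u

namespace cylinderIntegrand

variable {p a b u : ℝ}

theorem pos (hu : 0 < u) : 0 < cylinderIntegrand p a u :=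
  mul_pos (rpow_pos_of_pos hu _) (exp_pos _)

theorem nonneg (hu : 0 ≤ u) : 0 ≤ cylinderIntegrand p a u :=
  mul_nonneg (rpow_nonneg hu _) (exp_pos _).le

theorem le_of_le (hab : a ≤ b) (hu : 0 ≤ u) : cylinderIntegrand p a u ≤ cylinderIntegrand p b u :=
  mul_le_mul_of_nonneg_left (exp_le_exp.2 (by nlinarith)) (rpow_nonneg hu _)

theorem lt_of_lt (hab : a < b) (hu : 0 < u) : cylinderIntegrand p a u < cylinderIntegrand p b u :=
  mul_lt_mul_of_pos_left (exp_lt_exp.2 (by nlinarith)) (rpow_pos_of_pos hu _)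

theorem exp_mul_le (ha : 0 ≤ a) (hu : 1 ≤ u) :
    exp a * cylinderIntegrand p 0 u ≤ cylinderIntegrand p a u := by
  rw [cylinderIntegrand, cylinderIntegrand, mul_left_comm, ← exp_add]
  exact mul_le_mul_of_nonneg_left (exp_le_exp.2 (by nlinarith)) (rpow_nonneg (by linarith) _)

theorem continuousOn (p a : ℝ) : ContinuousOn (cylinderIntegrand p a) (Ioi 0) :=
  fun u hu => ((continuousAt_rpow_const u _ (Or.inl (ne_of_gt hu))).mul
    (by fun_prop)).continuousWithinAt

theorem aestronglyMeasurable (p a : ℝ) :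
    AEStronglyMeasurable (cylinderIntegrand p a) (volume.restrict (Ioi 0)) :=
  (continuousOn p a).aestronglyMeasurable measurableSet_Ioi

/-- Completing the square, `e^(a u - u²/2) ≤ e^((a+1)²/2) e^(-u)`, so the Gamma integrand
dominates. -/
theorem integrableOn (hp : 0 < p) (a : ℝ) : IntegrableOn (cylinderIntegrand p a) (Ioi 0) := by
  refine ((GammaIntegral_convergent hp).const_mul (exp ((a + 1) ^ 2 / 2))).mono'
    (aestronglyMeasurable p a) ?_
  filter_upwards [ae_restrict_mem measurableSet_Ioi] with u hu
  have hexp : exp (a * u - u ^ 2 / 2) ≤ exp ((a + 1) ^ 2 / 2) * exp (-u) := by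
    rw [← exp_add, exp_le_exp]
    nlinarith [sq_nonneg (a + 1 - u)]
  calc ‖cylinderIntegrand p a u‖ = u ^ (p - 1) * exp (a * u - u ^ 2 / 2) :=
        norm_of_nonneg (nonneg (le_of_lt hu))
    _ ≤ u ^ (p - 1) * (exp ((a + 1) ^ 2 / 2) * exp (-u)) :=
        mul_le_mul_of_nonneg_left hexp (rpow_nonneg (le_of_lt hu) _)
    _ = exp ((a + 1) ^ 2 / 2) * (exp (-u) * u ^ (p - 1)) := by ring

end cylinderIntegrand

namespace cylinderIntegral

open cylinderIntegrand

variable {p : ℝ}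

theorem pos (hp : 0 < p) (a : ℝ) : 0 < cylinderIntegral p a :=
  setIntegral_Ioi_pos (integrableOn hp a) fun _ hu => cylinderIntegrand.pos hu

theorem strictMono (hp : 0 < p) : StrictMono (cylinderIntegral p) := by
  intro a b hab
  have hdiff : 0 < ∫ u in Ioi (0:ℝ), (cylinderIntegrand p b u - cylinderIntegrand p a u) :=
    setIntegral_Ioi_pos ((integrableOn hp b).sub (integrableOn hp a))
      fun _ hu => sub_pos.2 (cylinderIntegrand.lt_of_lt hab hu)
  rw [integral_sub (integrableOn hp b) (integrableOn hp a)] at hdiff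
  exact sub_pos.1 hdiff

theorem continuous (hp : 0 < p) : Continuous (cylinderIntegral p) := by
  refine continuous_iff_continuousAt.2 fun a₀ => continuousAt_of_dominated
    (Eventually.of_forall (aestronglyMeasurable p)) ?_ (integrableOn hp (a₀ + 1)) ?_
  · filter_upwards [Ioo_mem_nhds (sub_one_lt a₀) (lt_add_one a₀)] with a ha
    filter_upwards [ae_restrict_mem measurableSet_Ioi] with u hu
    rw [norm_of_nonneg (nonneg (le_of_lt hu))]
    exact cylinderIntegrand.le_of_le ha.2.le (le_of_lt hu)
  · exact Eventually.of_forall fun u => by unfold cylinderIntegrand; fun_prop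

theorem tendsto_atBot (hp : 0 < p) : Tendsto (cylinderIntegral p) atBot (nhds 0) := by
  have hlim : ∀ u ∈ Ioi (0:ℝ), Tendsto (fun a => cylinderIntegrand p a u) atBot (nhds 0) := by
    intro u hu
    have hexponent : Tendsto (fun a : ℝ => a * u - u ^ 2 / 2) atBot atBot :=
      tendsto_atBot_add_const_right _ _ (tendsto_id.atBot_mul_const hu)
    simpa [cylinderIntegrand] using (tendsto_exp_atBot.comp hexponent).const_mul (u ^ (p - 1))
  have := tendsto_integral_filter_of_dominated_convergence (cylinderIntegrand p 0)
    (Eventually.of_forall (aestronglyMeasurable p))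
    ((eventually_le_atBot 0).mono fun a ha => (ae_restrict_mem measurableSet_Ioi).mono
      fun u hu => by
        rw [norm_of_nonneg (nonneg (le_of_lt hu))]
        exact cylinderIntegrand.le_of_le ha (le_of_lt hu))
    (integrableOn hp 0) ((ae_restrict_mem measurableSet_Ioi).mono hlim)
  rwa [integral_zero] at this

theorem exp_mul_le (hp : 0 < p) {a : ℝ} (ha : 0 ≤ a) :
    exp a * ∫ u in Ioi (1:ℝ), cylinderIntegrand p 0 u ≤ cylinderIntegral p a := by
  have hsub : Ioi (1:ℝ) ⊆ Ioi 0 := Ioi_subset_Ioi zero_le_one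
  rw [← integral_const_mul]
  calc ∫ u in Ioi (1:ℝ), exp a * cylinderIntegrand p 0 u
      ≤ ∫ u in Ioi (1:ℝ), cylinderIntegrand p a u :=
        setIntegral_mono_on (((integrableOn hp 0).mono_set hsub).const_mul _)
          ((integrableOn hp a).mono_set hsub) measurableSet_Ioi
          fun u hu => cylinderIntegrand.exp_mul_le ha (le_of_lt hu)
    _ ≤ cylinderIntegral p a :=
        setIntegral_mono_set (integrableOn hp a)
          ((ae_restrict_mem measurableSet_Ioi).mono fun u hu => nonneg (le_of_lt hu))
          hsub.eventuallyLE

theorem tendsto_atTop (hp : 0 < p) : Tendsto (cylinderIntegral p) atTop atTop := by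
  have hC : 0 < ∫ u in Ioi (1:ℝ), cylinderIntegrand p 0 u :=
    setIntegral_Ioi_pos ((integrableOn hp 0).mono_set (Ioi_subset_Ioi zero_le_one))
      fun _ hu => cylinderIntegrand.pos (zero_lt_one.trans hu)
  exact tendsto_atTop_mono' atTop ((eventually_ge_atTop 0).mono fun _ ha => exp_mul_le hp ha)
    ((tendsto_exp_atTop.atTop_mul_const hC))

end cylinderIntegral

section Ratio

variable {f g : ℝ → ℝ}

theorem strictMono_div_of_strictAnti (hf : StrictMono f) (hg : StrictAnti g)
    (hf0 : ∀ x, 0 < f x) (hg0 : ∀ x, 0 < g x) : StrictMono fun x => f x / g x :=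
  fun a b hab => calc
    f a / g a < f b / g a := div_lt_div_of_pos_right (hf hab) (hg0 a)
    _ < f b / g b := div_lt_div_of_pos_left (hf0 b) (hg0 b) (hg hab)

theorem tendsto_div_atBot_nhds_zero_of_antitone (hf : Tendsto f atBot (nhds 0)) (hg : Antitone g)
    (hf0 : ∀ x, 0 ≤ f x) (hg0 : ∀ x, 0 < g x) :
    Tendsto (fun x => f x / g x) atBot (nhds 0) := by
  have hupper : Tendsto (fun x => f x / g 0) atBot (nhds 0) := by
    simpa using hf.div_const (g 0)
  refine tendsto_of_tendsto_of_tendsto_of_le_of_le' tendsto_const_nhds hupper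
    (Eventually.of_forall fun x => div_nonneg (hf0 x) (hg0 x).le) ?_
  filter_upwards [eventually_le_atBot 0] with x hx
  exact div_le_div_of_nonneg_left (hf0 x) (hg0 0) (hg hx)

theorem tendsto_div_atTop_atTop_of_antitone (hf : Tendsto f atTop atTop) (hg : Antitone g)
    (hf0 : ∀ x, 0 ≤ f x) (hg0 : ∀ x, 0 < g x) :
    Tendsto (fun x => f x / g x) atTop atTop := by
  refine tendsto_atTop_mono' atTop ?_ (hf.atTop_div_const (hg0 0))
  filter_upwards [eventually_ge_atTop 0] with x hx
  exact div_le_div_of_nonneg_left (hf0 x) (hg0 x) (hg hx)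

end Ratio

theorem range_eq_Ioi_zero_of_tendsto {f : ℝ → ℝ} (hc : Continuous f) (hpos : ∀ x, 0 < f x)
    (hbot : Tendsto f atBot (nhds 0)) (htop : Tendsto f atTop atTop) : range f = Ioi 0 := by
  refine Subset.antisymm (range_subset_iff.2 hpos) fun y hy => ?_
  exact mem_range_of_exists_le_of_exists_ge hc ((hbot.eventually (ge_mem_nhds hy)).exists)
    ((htop.eventually_ge_atTop y).exists)

theorem stmt2_general
    (μ σ θ r : ℝ)
    (hμ : 0 < μ) (hσ : 0 < σ) (hr : 0 < r)
    (F G : ℝ → ℝ)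
    (hF : ∀ x : ℝ, F x = ∫ u in Ioi (0:ℝ),
        u ^ (r / μ - 1) * Real.exp (Real.sqrt (2 * μ / σ ^ 2) * (x - θ) * u - u ^ 2 / 2))
    (hG : ∀ x : ℝ, G x = ∫ u in Ioi (0:ℝ),
        u ^ (r / μ - 1) * Real.exp (Real.sqrt (2 * μ / σ ^ 2) * (θ - x) * u - u ^ 2 / 2))
    (ψ : ℝ → ℝ) (hψ : ∀ x, ψ x = F x / G x) :
    (∀ x, 0 < ψ x) ∧ StrictMono ψ ∧
    Filter.Tendsto ψ Filter.atBot (nhds 0) ∧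
    Filter.Tendsto ψ Filter.atTop Filter.atTop ∧
    Continuous ψ ∧ Set.range ψ = Ioi (0:ℝ) := by
  set k := Real.sqrt (2 * μ / σ ^ 2)
  have hk : 0 < k := sqrt_pos.2 (by positivity)
  have hp : 0 < r / μ := div_pos hr hμ
  obtain rfl : F = fun x => cylinderIntegral (r / μ) (k * (x - θ)) := funext hF
  obtain rfl : G = fun x => cylinderIntegral (r / μ) (k * (θ - x)) := funext hG
  obtain rfl : ψ = _ := funext hψ
  have hF0 x : 0 < cylinderIntegral (r / μ) (k * (x - θ)) := cylinderIntegral.pos hp _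
  have hG0 x : 0 < cylinderIntegral (r / μ) (k * (θ - x)) := cylinderIntegral.pos hp _
  have hFmono : StrictMono fun x => cylinderIntegral (r / μ) (k * (x - θ)) :=
    fun a b hab => cylinderIntegral.strictMono hp (by nlinarith)
  have hGanti : StrictAnti fun x => cylinderIntegral (r / μ) (k * (θ - x)) :=
    fun a b hab => cylinderIntegral.strictMono hp (by nlinarith)
  have hpos x := div_pos (hF0 x) (hG0 x)
  have hbot := tendsto_div_atBot_nhds_zero_of_antitone ((cylinderIntegral.tendsto_atBot hp).comp
    ((tendsto_atBot_add_const_right _ _ tendsto_id).const_mul_atBot hk))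
    hGanti.antitone (fun x => (hF0 x).le) hG0
  have htop := tendsto_div_atTop_atTop_of_antitone ((cylinderIntegral.tendsto_atTop hp).comp
    ((tendsto_atTop_add_const_right _ _ tendsto_id).const_mul_atTop hk))
    hGanti.antitone (fun x => (hF0 x).le) hG0
  have hΦ := cylinderIntegral.continuous hp
  have hcont : Continuous fun x => cylinderIntegral (r / μ) (k * (x - θ)) /
      cylinderIntegral (r / μ) (k * (θ - x)) :=
    (hΦ.comp (by fun_prop)).div (hΦ.comp (by fun_prop)) fun x => (hG0 x).ne'
  exact ⟨hpos, strictMono_div_of_strictAnti hFmono hGanti hF0 hG0, hbot, htop, hcont,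
    range_eq_Ioi_zero_of_tendsto hcont hpos hbot htop⟩

/-- ψ = F/G is strictly positive, strictly increasing, ψ → 0 at −∞,
ψ → +∞ at +∞; consequently ψ is a continuous bijection from ℝ onto (0, +∞). -/
theorem stmt2
    (μ σ θ r c_s c_b : ℝ)
    (hμ : 0 < μ) (hσ : 0 < σ) (hr : 0 < r) (hcs : 0 < c_s) (hcb : 0 < c_b)
    (F G : ℝ → ℝ)
    (hF : ∀ x : ℝ, F x = ∫ u in Ioi (0:ℝ),
        u ^ (r / μ - 1) * Real.exp (Real.sqrt (2 * μ / σ ^ 2) * (x - θ) * u - u ^ 2 / 2))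
    (hG : ∀ x : ℝ, G x = ∫ u in Ioi (0:ℝ),
        u ^ (r / μ - 1) * Real.exp (Real.sqrt (2 * μ / σ ^ 2) * (θ - x) * u - u ^ 2 / 2))
    (ψ : ℝ → ℝ) (hψ : ∀ x, ψ x = F x / G x) :
    (∀ x, 0 < ψ x) ∧ StrictMono ψ ∧
    Filter.Tendsto ψ Filter.atBot (nhds 0) ∧
    Filter.Tendsto ψ Filter.atTop Filter.atTop ∧
    Continuous ψ ∧ Set.range ψ = Ioi (0:ℝ) :=
  stmt2_general μ σ θ r hμ hσ hr F G hF hG ψ hψ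
end

section
/- Set x* = θ + σ²/(2μ) − r/μ − 1. The equation f_b(x) = 0 has two distinct roots if and only if μ·e^{x*} > r·c_b, exactly one root if and only if μ·e^{x*} = r·c_b, and no root if and only if μ·e^{x*} < r·c_b. In the two-root case, denoting the roots x_{b1} < x_{b2}, one has x_{b1} < x* < x_{b2} < x_s, and f_b(x) < 0 for x ∈ (−∞, x_{b1}) ∪ (x_{b2}, +∞) while f_b(x) > 0 for x ∈ (x_{b1}, x_{b2}). -/
/-!
With `A = μθ + σ²/2 − r` and `c = r c_b`, `f_b x = A − μx − c e^{−x}` increases strictly up to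
`m = log (c/μ)`, decreases strictly after it, and tends to `−∞` at both ends. Its number of roots
is therefore decided by the sign of the peak value `f_b m = μ (x* − m)`, i.e. by comparing
`μ e^{x*}` with `c`. With two roots, `f_b x* = μ − c e^{−x*} > 0` places `x*` between them, and
`f_s > f_b` with `f_s` decreasing places `x_{b2}` before the root `x_s` of `f_s`.
-/

open Real Set Filter

def IsStrictPeak {α β : Type*} [Preorder α] [Preorder β] (f : α → β) (m : α) : Prop :=
  StrictMonoOn f (Iic m) ∧ StrictAntiOn f (Ici m)

namespace IsStrictPeak

variable {α β : Type*} [LinearOrder β] {f : α → β} {m x x₁ x₂ : α} {y : β}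

section Order

variable [LinearOrder α]

theorem lt_of_ne (h : IsStrictPeak f m) (hx : x ≠ m) : f x < f m := by
  rcases hx.lt_or_gt with hx | hx
  · exact h.1 hx.le le_rfl hx
  · exact h.2 le_rfl hx.le hx

theorem le (h : IsStrictPeak f m) (x : α) : f x ≤ f m := by
  rcases eq_or_ne x m with rfl | hx
  exacts [le_rfl, (h.lt_of_ne hx).le]

theorem lt_and_lt_of_eq (h : IsStrictPeak f m) (h12 : x₁ < x₂) (heq : f x₁ = f x₂) :
    x₁ < m ∧ m < x₂ := by
  constructor
  · by_contra! hm
    exact (h.2 hm (hm.trans h12.le) h12).ne' heq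
  · by_contra! hm
    exact (h.1 (h12.le.trans hm) hm h12).ne heq

section Roots

variable (h : IsStrictPeak f m) (h12 : x₁ < x₂) (h1 : f x₁ = y) (h2 : f x₂ = y)
include h h12 h1 h2

theorem lt_of_lt_or_lt (hx : x < x₁ ∨ x₂ < x) : f x < y := by
  obtain ⟨h1m, hm2⟩ := h.lt_and_lt_of_eq h12 (h1.trans h2.symm)
  rcases hx with hx | hx
  · exact h1 ▸ h.1 (hx.trans h1m).le h1m.le hx
  · exact h2 ▸ h.2 hm2.le (hm2.trans hx).le hx

theorem lt_of_mem_Ioo (hx : x ∈ Ioo x₁ x₂) : y < f x := by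
  obtain ⟨h1m, hm2⟩ := h.lt_and_lt_of_eq h12 (h1.trans h2.symm)
  rcases le_total x m with hxm | hmx
  · exact h1 ▸ h.1 h1m.le hxm hx.1
  · exact h2 ▸ h.2 hmx hm2.le hx.2

theorem mem_Ioo_of_lt (hx : y < f x) : x ∈ Ioo x₁ x₂ := by
  refine ⟨lt_of_not_ge fun hx1 => ?_, lt_of_not_ge fun hx2 => ?_⟩
  · rcases hx1.lt_or_eq with hx1 | rfl
    exacts [(h.lt_of_lt_or_lt h12 h1 h2 (.inl hx1)).not_gt hx, hx.ne' h1]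
  · rcases hx2.lt_or_eq with hx2 | rfl
    exacts [(h.lt_of_lt_or_lt h12 h1 h2 (.inr hx2)).not_gt hx, hx.ne' h2]

end Roots

end Order

section Topology

variable [TopologicalSpace α] [ConditionallyCompleteLinearOrder α] [OrderTopology α]
  [DenselyOrdered α] [TopologicalSpace β] [OrderClosedTopology β] [NoBotOrder β]
  (h : IsStrictPeak f m) (hf : Continuous f) (htop : Tendsto f atTop atBot)
  (hbot : Tendsto f atBot atBot)
include h hf htop hbot

theorem exists_lt_lt_of_lt (hy : y < f m) :
    ∃ x₁ x₂, x₁ < m ∧ m < x₂ ∧ f x₁ = y ∧ f x₂ = y := by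
  obtain ⟨a, ha, ham⟩ := ((hbot.eventually_lt_atBot y).and (eventually_le_atBot m)).exists
  obtain ⟨b, hb, hmb⟩ := ((htop.eventually_lt_atBot y).and (eventually_ge_atTop m)).exists
  obtain ⟨x₁, hx₁, h1⟩ := intermediate_value_Icc ham hf.continuousOn ⟨ha.le, hy.le⟩
  obtain ⟨x₂, hx₂, h2⟩ := intermediate_value_Icc' hmb hf.continuousOn ⟨hb.le, hy.le⟩
  refine ⟨x₁, x₂, hx₁.2.lt_of_ne ?_, hx₂.1.lt_of_ne ?_, h1, h2⟩
  · rintro rfl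
    exact hy.ne' h1
  · rintro rfl
    exact hy.ne' h2

theorem exists_two_roots_iff : (∃ x₁ x₂, x₁ < x₂ ∧ f x₁ = y ∧ f x₂ = y) ↔ y < f m := by
  constructor
  · rintro ⟨x₁, x₂, h12, h1, h2⟩
    exact h1 ▸ h.lt_of_ne (h.lt_and_lt_of_eq h12 (h1.trans h2.symm)).1.ne
  · intro hy
    obtain ⟨x₁, x₂, h1m, hm2, h1, h2⟩ := h.exists_lt_lt_of_lt hf htop hbot hy
    exact ⟨x₁, x₂, h1m.trans hm2, h1, h2⟩

theorem existsUnique_root_iff : (∃! x, f x = y) ↔ f m = y := by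
  constructor
  · rintro ⟨x, hx, huniq⟩
    rcases lt_trichotomy y (f m) with hy | hy | hy
    · obtain ⟨x₁, x₂, h1m, hm2, h1, h2⟩ := h.exists_lt_lt_of_lt hf htop hbot hy
      exact absurd ((huniq x₁ h1).trans (huniq x₂ h2).symm) (h1m.trans hm2).ne
    · exact hy.symm
    · exact absurd hx ((h.le x).trans_lt hy).ne
  · intro hm
    exact ⟨m, hm, fun x hx => by_contra fun hne => (h.lt_of_ne hne).ne (hx.trans hm.symm)⟩

theorem forall_ne_iff : (∀ x, f x ≠ y) ↔ f m < y := by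
  refine ⟨fun hne => lt_of_not_ge fun hy => ?_, fun hm x => ((h.le x).trans_lt hm).ne⟩
  rcases hy.lt_or_eq with hy | hy
  · obtain ⟨x₁, -, -, -, h1, -⟩ := h.exists_lt_lt_of_lt hf htop hbot hy
    exact hne x₁ h1
  · exact hne m hy.symm

end Topology

end IsStrictPeak

noncomputable def affineSubExp (A μ c x : ℝ) : ℝ := A - μ * x - c * exp (-x)

section affineSubExp

variable (A : ℝ) {μ c : ℝ}

theorem continuous_affineSubExp (μ c : ℝ) : Continuous (affineSubExp A μ c) := by
  unfold affineSubExp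
  fun_prop

theorem hasDerivAt_affineSubExp (μ c x : ℝ) :
    HasDerivAt (affineSubExp A μ c) (c * exp (-x) - μ) x := by
  have h : HasDerivAt (affineSubExp A μ c) (-(μ * 1) - c * (exp (-x) * -1)) x :=
    (((hasDerivAt_id x).const_mul μ).const_sub A).sub ((hasDerivAt_neg x).exp.const_mul c)
  convert h using 1
  ring

theorem isStrictPeak_affineSubExp (hμ : 0 < μ) (hc : 0 < c) :
    IsStrictPeak (affineSubExp A μ c) (log (c / μ)) := by
  have hexp : c * exp (-log (c / μ)) = μ := by
    rw [exp_neg, exp_log (div_pos hc hμ)]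
    field_simp
  have hderiv (x : ℝ) : deriv (affineSubExp A μ c) x = c * exp (-x) - c * exp (-log (c / μ)) := by
    rw [(hasDerivAt_affineSubExp A μ c x).deriv, hexp]
  constructor
  · refine strictMonoOn_of_deriv_pos (convex_Iic _) (continuous_affineSubExp A μ c).continuousOn
      fun x hx => ?_
    rw [interior_Iic] at hx
    rw [hderiv, sub_pos]
    exact mul_lt_mul_of_pos_left (exp_lt_exp.2 (neg_lt_neg hx)) hc
  · refine strictAntiOn_of_deriv_neg (convex_Ici _) (continuous_affineSubExp A μ c).continuousOn
      fun x hx => ?_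
    rw [interior_Ici] at hx
    rw [hderiv, sub_neg]
    exact mul_lt_mul_of_pos_left (exp_lt_exp.2 (neg_lt_neg hx)) hc

theorem tendsto_affineSubExp_atTop (hμ : 0 < μ) (hc : 0 ≤ c) :
    Tendsto (affineSubExp A μ c) atTop atBot := by
  refine tendsto_atBot_mono (fun x => ?_) <|
    tendsto_atBot_add_const_left _ A (tendsto_id.const_mul_atTop_of_neg (neg_neg_of_pos hμ))
  have := mul_nonneg hc (exp_pos (-x)).le
  simp only [affineSubExp, id]
  linarith

theorem tendsto_affineSubExp_atBot (hμ : 0 < μ) (hc : 0 < c) :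
    Tendsto (affineSubExp A μ c) atBot atBot := by
  set p := log (c / (2 * μ))
  have hp : c * exp (-p) = 2 * μ := by
    rw [exp_neg, exp_log (by positivity)]
    field_simp
  refine tendsto_atBot_mono (fun x => ?_) <|
    tendsto_atBot_add_const_left _ (A - 2 * μ * (1 + p)) (tendsto_id.const_mul_atBot hμ)
  -- the tangent line of `c e^{-x}` at `p` has slope `-2μ`, which beats the `-μ x` term
  have htangent : 2 * μ * (1 + p - x) ≤ c * exp (-x) := by
    calc 2 * μ * (1 + p - x) = c * exp (-p) * (p - x + 1) := by rw [hp]; ring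
      _ ≤ c * exp (-p) * exp (p - x) := by gcongr; exact add_one_le_exp _
      _ = c * exp (-x) := by rw [mul_assoc, ← exp_add]; congr 2; ring
  simp only [affineSubExp, id]
  linarith

theorem affineSubExp_log_div (hμ : 0 < μ) (hc : 0 < c) :
    affineSubExp A μ c (log (c / μ)) = μ * (A / μ - 1 - log (c / μ)) := by
  rw [affineSubExp, exp_neg, exp_log (div_pos hc hμ)]
  field_simp
  ring

theorem zero_lt_affineSubExp_log_div_iff (hμ : 0 < μ) (hc : 0 < c) :
    0 < affineSubExp A μ c (log (c / μ)) ↔ c < μ * exp (A / μ - 1) := by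
  rw [affineSubExp_log_div A hμ hc, mul_pos_iff_of_pos_left hμ, sub_pos,
    log_lt_iff_lt_exp (div_pos hc hμ), div_lt_iff₀' hμ]

theorem affineSubExp_log_div_eq_zero_iff (hμ : 0 < μ) (hc : 0 < c) :
    affineSubExp A μ c (log (c / μ)) = 0 ↔ μ * exp (A / μ - 1) = c := by
  rw [affineSubExp_log_div A hμ hc, mul_eq_zero, or_iff_right hμ.ne', sub_eq_zero,
    ← exp_eq_exp, exp_log (div_pos hc hμ), eq_div_iff hμ.ne', mul_comm]

theorem affineSubExp_log_div_neg_iff (hμ : 0 < μ) (hc : 0 < c) :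
    affineSubExp A μ c (log (c / μ)) < 0 ↔ μ * exp (A / μ - 1) < c := by
  rw [affineSubExp_log_div A hμ hc, ← neg_pos, ← mul_neg, mul_pos_iff_of_pos_left hμ, neg_pos,
    sub_neg, lt_log_iff_exp_lt (div_pos hc hμ), lt_div_iff₀' hμ]

theorem zero_lt_affineSubExp_div_sub_one (hμ : 0 < μ) (h : c < μ * exp (A / μ - 1)) :
    0 < affineSubExp A μ c (A / μ - 1) := by
  have hexp : c * exp (-(A / μ - 1)) < μ := by
    rw [exp_neg, ← div_eq_mul_inv, div_lt_iff₀ (exp_pos _)]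
    linarith [mul_comm μ (exp (A / μ - 1))]
  have hlin : A - μ * (A / μ - 1) = μ := by
    field_simp
    ring
  rw [affineSubExp]
  linarith

theorem antitone_affineSubExp (hμ : 0 ≤ μ) (hc : c ≤ 0) : Antitone (affineSubExp A μ c) :=
  fun x y hxy => by
    have := mul_le_mul_of_nonpos_left (exp_le_exp.2 (neg_le_neg hxy)) hc
    have := mul_le_mul_of_nonneg_left hxy hμ
    simp only [affineSubExp]
    linarith

theorem affineSubExp_lt_of_lt {c' : ℝ} (μ : ℝ) (h : c < c') (x : ℝ) :
    affineSubExp A μ c' x < affineSubExp A μ c x := by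
  have := mul_lt_mul_of_pos_right h (exp_pos (-x))
  simp only [affineSubExp]
  linarith

end affineSubExp

theorem stmt4_general
    (μ σ θ r c_s c_b : ℝ)
    (hμ : 0 < μ) (hr : 0 < r) (hcs : 0 < c_s) (hcb : 0 < c_b)
    (f_s f_b : ℝ → ℝ)
    (hfs : ∀ x : ℝ, f_s x = (μ * θ + σ ^ 2 / 2 - r) - μ * x + r * c_s * Real.exp (-x))
    (hfb : ∀ x : ℝ, f_b x = (μ * θ + σ ^ 2 / 2 - r) - μ * x - r * c_b * Real.exp (-x))
    (x_s : ℝ) (hxs : f_s x_s = 0) :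
    ((∃ x1 x2 : ℝ, x1 < x2 ∧ f_b x1 = 0 ∧ f_b x2 = 0) ↔
        r * c_b < μ * Real.exp (θ + σ ^ 2 / (2 * μ) - r / μ - 1)) ∧
    ((∃! x : ℝ, f_b x = 0) ↔
        μ * Real.exp (θ + σ ^ 2 / (2 * μ) - r / μ - 1) = r * c_b) ∧
    ((∀ x : ℝ, f_b x ≠ 0) ↔
        μ * Real.exp (θ + σ ^ 2 / (2 * μ) - r / μ - 1) < r * c_b) ∧
    (∀ x1 x2 : ℝ, x1 < x2 → f_b x1 = 0 → f_b x2 = 0 →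
      x1 < θ + σ ^ 2 / (2 * μ) - r / μ - 1 ∧
      θ + σ ^ 2 / (2 * μ) - r / μ - 1 < x2 ∧ x2 < x_s ∧
      (∀ x, x < x1 ∨ x2 < x → f_b x < 0) ∧
      (∀ x, x1 < x → x < x2 → 0 < f_b x)) := by
  set A := μ * θ + σ ^ 2 / 2 - r
  have hxstar : θ + σ ^ 2 / (2 * μ) - r / μ - 1 = A / μ - 1 := by
    field_simp
    ring
  obtain rfl : f_b = affineSubExp A μ (r * c_b) := funext hfb
  have hc : 0 < r * c_b := mul_pos hr hcb
  have hpeak := isStrictPeak_affineSubExp A hμ hc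
  have hcont := continuous_affineSubExp A μ (r * c_b)
  have htop := tendsto_affineSubExp_atTop A hμ hc.le
  have hbot := tendsto_affineSubExp_atBot A hμ hc
  rw [hxstar]
  refine ⟨(hpeak.exists_two_roots_iff hcont htop hbot).trans (zero_lt_affineSubExp_log_div_iff A hμ hc),
    (hpeak.existsUnique_root_iff hcont htop hbot).trans (affineSubExp_log_div_eq_zero_iff A hμ hc),
    (hpeak.forall_ne_iff hcont htop hbot).trans (affineSubExp_log_div_neg_iff A hμ hc),
    fun x1 x2 h12 h1 h2 => ?_⟩
  have hpeak_pos := (hpeak.exists_two_roots_iff (y := 0) hcont htop hbot).1 ⟨x1, x2, h12, h1, h2⟩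
  obtain ⟨h1x, hx2⟩ := hpeak.mem_Ioo_of_lt h12 h1 h2 <| zero_lt_affineSubExp_div_sub_one A hμ <|
    (zero_lt_affineSubExp_log_div_iff A hμ hc).1 hpeak_pos
  obtain rfl : f_s = affineSubExp A μ (-(r * c_s)) := funext fun x => by
    rw [hfs, affineSubExp]
    ring
  have hcs' : -(r * c_s) < 0 := neg_neg_of_pos (mul_pos hr hcs)
  have hfs_x2 : 0 < affineSubExp A μ (-(r * c_s)) x2 :=
    h2 ▸ affineSubExp_lt_of_lt A μ (hcs'.trans hc) x2
  refine ⟨h1x, hx2, lt_of_not_ge fun h => ?_, fun x hx => hpeak.lt_of_lt_or_lt h12 h1 h2 hx,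
    fun x hx1 hx2 => hpeak.lt_of_mem_Ioo h12 h1 h2 ⟨hx1, hx2⟩⟩
  exact (antitone_affineSubExp A hμ.le hcs'.le h).not_gt (hxs ▸ hfs_x2)

/-- With x* = θ + σ²/(2μ) − r/μ − 1, the equation f_b = 0 has two
distinct roots iff μ·e^{x*} > r·c_b, exactly one root iff μ·e^{x*} = r·c_b, and no
root iff μ·e^{x*} < r·c_b. In the two-root case with roots x_{b1} < x_{b2}, one
has x_{b1} < x* < x_{b2} < x_s, f_b < 0 outside [x_{b1}, x_{b2}] and f_b > 0 on
(x_{b1}, x_{b2}). -/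
theorem stmt4
    (μ σ θ r c_s c_b : ℝ)
    (hμ : 0 < μ) (hσ : 0 < σ) (hr : 0 < r) (hcs : 0 < c_s) (hcb : 0 < c_b)
    (f_s f_b : ℝ → ℝ)
    (hfs : ∀ x : ℝ, f_s x = (μ * θ + σ ^ 2 / 2 - r) - μ * x + r * c_s * Real.exp (-x))
    (hfb : ∀ x : ℝ, f_b x = (μ * θ + σ ^ 2 / 2 - r) - μ * x - r * c_b * Real.exp (-x))
    (x_s : ℝ) (hxs : f_s x_s = 0) (hxs_uniq : ∀ y, f_s y = 0 → y = x_s) :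
    ((∃ x1 x2 : ℝ, x1 < x2 ∧ f_b x1 = 0 ∧ f_b x2 = 0) ↔
        r * c_b < μ * Real.exp (θ + σ ^ 2 / (2 * μ) - r / μ - 1)) ∧
    ((∃! x : ℝ, f_b x = 0) ↔
        μ * Real.exp (θ + σ ^ 2 / (2 * μ) - r / μ - 1) = r * c_b) ∧
    ((∀ x : ℝ, f_b x ≠ 0) ↔
        μ * Real.exp (θ + σ ^ 2 / (2 * μ) - r / μ - 1) < r * c_b) ∧
    (∀ x1 x2 : ℝ, x1 < x2 → f_b x1 = 0 → f_b x2 = 0 →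
      x1 < θ + σ ^ 2 / (2 * μ) - r / μ - 1 ∧
      θ + σ ^ 2 / (2 * μ) - r / μ - 1 < x2 ∧ x2 < x_s ∧
      (∀ x, x < x1 ∨ x2 < x → f_b x < 0) ∧
      (∀ x, x1 < x → x < x2 → 0 < f_b x)) :=
  stmt4_general μ σ θ r c_s c_b hμ hr hcs hcb f_s f_b hfs hfb x_s hxs
end

section
/- For every x ∈ ℝ the integrals ∫_{−∞}^x Ψ(s)·e^s·f_s(s) ds and ∫_x^{+∞} Φ(s)·e^s·f_s(s) ds converge, and the representation e^x − c_s = −G(x)·∫_{−∞}^x Ψ(s)·e^s·f_s(s) ds − F(x)·∫_x^{+∞} Φ(s)·e^s·f_s(s) ds holds. -/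
/-!
With `J_s a = ∫₀^∞ u^s e^(au - u²/2) du`, `k = √(2μ/σ²)` and `ν = r/μ` we have
`F x = J_{ν-1} (k (x - θ))` and `G x = J_{ν-1} (-k (x - θ))`. Since `J_s' = J_{s+1}` and,
integrating by parts in `u`, `J_{ν+1} = ν J_{ν-1} + a J_ν`, both solve
`σ²/2 u'' + μ (θ - x) u' = r u`; by Abel's identity their Wronskian is
`W θ · exp (μ (x - θ)² / σ²)`. The function `h x = eˣ - c_s` satisfies
`σ²/2 h'' + μ (θ - x) h' - r h = eˣ f_s`, so variation of parameters gives `h = F Q - G P` with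
`P = (F h' - F' h) / W`, `P' = Ψ eˣ f_s`, `Q = (G h' - G' h) / W` and `Q' = Φ eˣ f_s`. The
Gaussian growth of `W` makes `P` vanish at `-∞`, `Q` vanish at `+∞`, and both integrands
integrable.
-/

open Real MeasureTheory Set Filter Topology

lemma integrable_exp_mul_sub_mul_sq {α : ℝ} (hα : 0 < α) (c θ : ℝ) :
    Integrable fun s : ℝ => exp (c * s - α * (s - θ) ^ 2) := by
  have h : (fun s : ℝ => exp (c * s - α * (s - θ) ^ 2)) = fun s =>
      exp (c * θ + c ^ 2 / (4 * α)) * exp (-α * (s - (θ + c / (2 * α))) ^ 2) := by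
    ext s
    rw [← exp_add]
    congr 1
    field_simp
    ring
  rw [h]
  exact ((integrable_exp_neg_mul_sq hα).comp_sub_right _).const_mul _

lemma tendsto_exp_mul_sub_mul_sq_cocompact {α : ℝ} (hα : 0 < α) (c θ : ℝ) :
    Tendsto (fun s : ℝ => exp (c * s - α * (s - θ) ^ 2)) (cocompact ℝ) (𝓝 0) := by
  have h : (fun s : ℝ => c * s - α * (s - θ) ^ 2) =
      fun s => (s - θ) * (c + -α * (s - θ)) + c * θ := by
    ext s
    ring
  rw [tendsto_exp_comp_nhds_zero, h, cocompact_eq_atBot_atTop, tendsto_sup]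
  have hbot : Tendsto (fun s : ℝ => s - θ) atBot atBot :=
    tendsto_atBot_add_const_right _ _ tendsto_id
  have htop : Tendsto (fun s : ℝ => s - θ) atTop atTop :=
    tendsto_atTop_add_const_right _ _ tendsto_id
  exact ⟨tendsto_atBot_add_const_right _ _ (hbot.atBot_mul_atTop₀
      (tendsto_atTop_add_const_left _ _ (hbot.const_mul_atBot_of_neg (neg_neg_of_pos hα)))),
    tendsto_atBot_add_const_right _ _ (htop.atTop_mul_atBot₀
      (tendsto_atBot_add_const_left _ _ (htop.const_mul_atTop_of_neg (neg_neg_of_pos hα))))⟩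

lemma abs_mul_exp_le (s : ℝ) : |s| * exp s ≤ exp s * exp s + 1 := by
  rcases le_total 0 s with hs | hs
  · rw [abs_of_nonneg hs]
    nlinarith [add_one_le_exp s, exp_pos s]
  · have h : exp (-s) * exp s = 1 := by rw [← exp_add, neg_add_cancel, exp_zero]
    rw [abs_of_nonpos hs]
    nlinarith [add_one_le_exp (-s), exp_pos s, exp_pos (-s)]

lemma abs_add_mul_mul_exp_add_le (a b c s : ℝ) :
    |(a + b * s) * exp s + c| ≤ |a| * exp s + |b| * (exp s * exp s + 1) + |c| :=
  calc |(a + b * s) * exp s + c|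
      ≤ |a| * exp s + |b| * (|s| * exp s) + |c| := by
        rw [add_mul, mul_assoc]
        refine (abs_add_le _ _).trans (add_le_add_left ((abs_add_le _ _).trans ?_) _)
        rw [abs_mul, abs_mul, abs_mul, abs_of_pos (exp_pos s)]
    _ ≤ |a| * exp s + |b| * (exp s * exp s + 1) + |c| := by
        gcongr
        exact abs_mul_exp_le s

lemma integrable_div_of_eq_mul_exp_sq {α w₀ θ : ℝ} (hα : 0 < α) {w : ℝ → ℝ}
    (hw : ∀ s, w s = w₀ * exp (α * (s - θ) ^ 2)) (a b c : ℝ) :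
    Integrable fun s => ((a + b * s) * exp s + c) / w s := by
  have hE : ∀ n : ℝ, Integrable fun s => exp (n * s - α * (s - θ) ^ 2) :=
    fun n => integrable_exp_mul_sub_mul_sq hα n θ
  have hbound : Integrable fun s => |a| * exp (1 * s - α * (s - θ) ^ 2) +
      |b| * (exp (2 * s - α * (s - θ) ^ 2) + exp (0 * s - α * (s - θ) ^ 2)) +
      |c| * exp (0 * s - α * (s - θ) ^ 2) :=
    (((hE 1).const_mul _).add (((hE 2).add (hE 0)).const_mul _)).add ((hE 0).const_mul _)
  have hgauss : Integrable fun s => exp (-(α * (s - θ) ^ 2)) * ((a + b * s) * exp s + c) := by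
    refine hbound.mono' (by fun_prop : Continuous _).aestronglyMeasurable
      (Eventually.of_forall fun s => ?_)
    set e := exp (-(α * (s - θ) ^ 2))
    have hn : ∀ n : ℝ, exp (n * s - α * (s - θ) ^ 2) = exp (n * s) * e := fun n => by
      rw [← exp_add]
      ring_nf
    have h2 : exp (2 * s) = exp s * exp s := by rw [← exp_add, two_mul]
    rw [hn 1, hn 2, hn 0, one_mul, zero_mul, exp_zero, h2, norm_mul,
      norm_of_nonneg (exp_pos _).le, Real.norm_eq_abs]
    calc e * |(a + b * s) * exp s + c|
        ≤ e * (|a| * exp s + |b| * (exp s * exp s + 1) + |c|) := by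
          gcongr
          exact abs_add_mul_mul_exp_add_le a b c s
      _ = _ := by ring
  refine (hgauss.div_const w₀).congr (Eventually.of_forall fun s => ?_)
  dsimp only
  rw [hw, div_mul_eq_div_div_swap, exp_neg, inv_mul_eq_div]

lemma tendsto_div_of_eq_mul_exp_sq {l : Filter ℝ} (hl : l ≤ cocompact ℝ) {u u' w : ℝ → ℝ}
    (hu : Tendsto u l (𝓝 0)) (hu' : Tendsto u' l (𝓝 0)) {α w₀ θ : ℝ} (hα : 0 < α)
    (hw : ∀ s, w s = w₀ * exp (α * (s - θ) ^ 2)) (c : ℝ) :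
    Tendsto (fun s => (u s * exp s - u' s * (exp s - c)) / w s) l (𝓝 0) := by
  have hE : ∀ n : ℝ, Tendsto (fun s => exp (n * s - α * (s - θ) ^ 2)) l (𝓝 0) :=
    fun n => (tendsto_exp_mul_sub_mul_sq_cocompact hα n θ).mono_left hl
  have h := (((hu.mul (hE 1)).sub (hu'.mul (hE 1))).add ((hu'.mul (hE 0)).const_mul c)).div_const w₀
  simp only [mul_zero, sub_zero, add_zero, zero_div] at h
  refine h.congr fun s => ?_
  rw [hw, div_mul_eq_div_div_swap, one_mul, zero_mul, zero_sub, exp_sub, exp_neg]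
  congr 1
  field_simp
  ring

noncomputable def halfGaussMoment (s a : ℝ) : ℝ :=
  ∫ u in Ioi (0 : ℝ), u ^ s * exp (a * u - u ^ 2 / 2)

lemma aestronglyMeasurable_halfGaussMoment_integrand (s a : ℝ) :
    AEStronglyMeasurable (fun u : ℝ => u ^ s * exp (a * u - u ^ 2 / 2))
      (volume.restrict (Ioi 0)) :=
  ((continuousOn_id.rpow_const fun _ hu => Or.inl (ne_of_gt hu)).mul
    (by fun_prop)).aestronglyMeasurable measurableSet_Ioi

lemma integrableOn_halfGaussMoment_integrand {s : ℝ} (hs : -1 < s) (a : ℝ) :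
    IntegrableOn (fun u : ℝ => u ^ s * exp (a * u - u ^ 2 / 2)) (Ioi 0) := by
  refine Integrable.mono' ((integrable_rpow_mul_exp_neg_mul_sq (b := 1 / 4) (by norm_num)
    hs).const_mul (exp (a ^ 2))).restrict
    (aestronglyMeasurable_halfGaussMoment_integrand s a) ?_
  filter_upwards [ae_restrict_mem measurableSet_Ioi] with u (hu : 0 < u)
  rw [norm_of_nonneg (by positivity), mul_left_comm, ← exp_add]
  gcongr
  nlinarith [sq_nonneg (a - u / 2)]

lemma halfGaussMoment_nonneg (s a : ℝ) : 0 ≤ halfGaussMoment s a :=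
  setIntegral_nonneg measurableSet_Ioi fun u (hu : 0 < u) => by positivity

lemma hasDerivAt_halfGaussMoment {s : ℝ} (hs : -1 < s) (a : ℝ) :
    HasDerivAt (halfGaussMoment s) (halfGaussMoment (s + 1) a) a := by
  refine (hasDerivAt_integral_of_dominated_loc_of_deriv_le
    (F' := fun b u => u ^ (s + 1) * exp (b * u - u ^ 2 / 2))
    (bound := fun u => u ^ (s + 1) * exp ((a + 1) * u - u ^ 2 / 2))
    (Metric.ball_mem_nhds a one_pos)
    (Eventually.of_forall fun b => aestronglyMeasurable_halfGaussMoment_integrand s b)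
    (integrableOn_halfGaussMoment_integrand hs a)
    (aestronglyMeasurable_halfGaussMoment_integrand (s + 1) a) ?_
    (integrableOn_halfGaussMoment_integrand (by linarith) (a + 1)) ?_).2
  · filter_upwards [ae_restrict_mem measurableSet_Ioi] with u (hu : 0 < u) b hb
    have hb : b ≤ a + 1 := by linarith [(abs_lt.1 (mem_ball_iff_norm.1 hb)).2]
    rw [norm_of_nonneg (by positivity)]
    gcongr
  · filter_upwards [ae_restrict_mem measurableSet_Ioi] with u (hu : 0 < u) b _
    refine ((((hasDerivAt_id b).mul_const u).sub_const (u ^ 2 / 2)).exp.const_mul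
      (u ^ s)).congr_deriv ?_
    rw [rpow_add_one hu.ne']
    simp only [id]
    ring

lemma monotone_halfGaussMoment {s : ℝ} (hs : -1 < s) : Monotone (halfGaussMoment s) :=
  monotone_of_hasDerivAt_nonneg (hasDerivAt_halfGaussMoment hs) fun a =>
    halfGaussMoment_nonneg (s + 1) a

lemma continuous_halfGaussMoment {s : ℝ} (hs : -1 < s) : Continuous (halfGaussMoment s) :=
  continuous_iff_continuousAt.2 fun a => (hasDerivAt_halfGaussMoment hs a).continuousAt

lemma tendsto_halfGaussMoment_atBot {s : ℝ} (hs : -1 < s) :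
    Tendsto (halfGaussMoment s) atBot (𝓝 0) := by
  rw [show (0 : ℝ) = ∫ u in Ioi (0 : ℝ), (0 : ℝ) by simp]
  refine tendsto_integral_filter_of_dominated_convergence
    (fun u => u ^ s * exp (0 * u - u ^ 2 / 2))
    (Eventually.of_forall fun b => aestronglyMeasurable_halfGaussMoment_integrand s b) ?_
    (integrableOn_halfGaussMoment_integrand hs 0) ?_
  · filter_upwards [eventually_le_atBot 0] with b hb
    filter_upwards [ae_restrict_mem measurableSet_Ioi] with u (hu : 0 < u)
    rw [norm_of_nonneg (by positivity)]
    gcongr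
  · filter_upwards [ae_restrict_mem measurableSet_Ioi] with u (hu : 0 < u)
    simpa [sub_eq_add_neg] using ((tendsto_exp_atBot.comp (tendsto_atBot_add_const_right _
      (-(u ^ 2 / 2)) (tendsto_id.atBot_mul_const hu))).const_mul (u ^ s))

lemma halfGaussMoment_add_one {ν : ℝ} (hν : 0 < ν) (a : ℝ) :
    halfGaussMoment (ν + 1) a = ν * halfGaussMoment (ν - 1) a + a * halfGaussMoment ν a := by
  -- integrate `d/du (u ^ ν * exp (a * u - u ^ 2 / 2))` over `(0, ∞)`: both boundary terms vanish
  set e : ℝ → ℝ := fun u => exp (a * u - u ^ 2 / 2)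
  have hI : ∀ {s : ℝ}, -1 < s → IntegrableOn (fun u => u ^ s * e u) (Ioi 0) :=
    fun hs => integrableOn_halfGaussMoment_integrand hs a
  have hI₁ := (hI (s := ν - 1) (by linarith)).const_mul ν
  have hI₂ := (hI (s := ν) (by linarith)).const_mul a
  have hI₃ := hI (s := ν + 1) (by linarith)
  have hI₁₂ : IntegrableOn (fun u => ν * (u ^ (ν - 1) * e u) + a * (u ^ ν * e u)) (Ioi 0) :=
    hI₁.add hI₂
  have hderiv : ∀ u ∈ Ioi (0 : ℝ), HasDerivAt (fun u => u ^ ν * e u)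
      (ν * (u ^ (ν - 1) * e u) + a * (u ^ ν * e u) - u ^ (ν + 1) * e u) u := by
    intro u (hu : 0 < u)
    refine ((hasDerivAt_rpow_const (Or.inl hu.ne')).mul (((hasDerivAt_id u).const_mul a).sub
      ((hasDerivAt_pow 2 u).div_const 2)).exp).congr_deriv ?_
    rw [rpow_add_one hu.ne']
    simp only [id, e, Pi.sub_apply]
    ring
  have hlim : Tendsto (fun u => u ^ ν * e u) atTop (𝓝 0) := by
    have h := (tendsto_rpow_mul_exp_neg_mul_atTop_nhds_zero ν 1 one_pos).mul
      ((tendsto_exp_mul_sub_mul_sq_cocompact (by norm_num : (0 : ℝ) < 1 / 2) (a + 1) 0).mono_left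
        atTop_le_cocompact)
    rw [zero_mul] at h
    refine h.congr fun u => ?_
    simp only [e, mul_assoc, ← exp_add]
    ring_nf
  have hcont : ContinuousWithinAt (fun u => u ^ ν * e u) (Ici 0) 0 :=
    ((continuousAt_rpow_const 0 ν (Or.inr hν.le)).mul (by fun_prop)).continuousWithinAt
  have h := integral_Ioi_of_hasDerivAt_of_tendsto hcont hderiv (hI₁₂.sub hI₃) hlim
  rw [integral_sub hI₁₂ hI₃, integral_add hI₁ hI₂, integral_const_mul,
    integral_const_mul] at h
  simp only [zero_rpow hν.ne', zero_mul, sub_zero] at h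
  unfold halfGaussMoment
  linarith

section SecondOrderLinearODE

variable {u u' v v' p q w : ℝ → ℝ}

lemma hasDerivAt_wronskian (hu : ∀ x, HasDerivAt u (u' x) x)
    (hu' : ∀ x, HasDerivAt u' (p x * u' x + q x * u x) x) (hv : ∀ x, HasDerivAt v (v' x) x)
    (hv' : ∀ x, HasDerivAt v' (p x * v' x + q x * v x) x)
    (hw : ∀ x, w x = u' x * v x - u x * v' x) (x : ℝ) :
    HasDerivAt w (p x * w x) x := by
  rw [funext hw]
  exact (((hu' x).mul (hv x)).sub ((hu x).mul (hv' x))).congr_deriv (by ring)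

lemma hasDerivAt_div_wronskian {h h' h'' : ℝ → ℝ} {x : ℝ} (hu : HasDerivAt u (u' x) x)
    (hu' : HasDerivAt u' (p x * u' x + q x * u x) x) (hh : HasDerivAt h (h' x) x)
    (hh' : HasDerivAt h' (h'' x) x) (hw : HasDerivAt w (p x * w x) x) (hw0 : w x ≠ 0) :
    HasDerivAt (fun s => (u s * h' s - u' s * h s) / w s)
      (u x * (h'' x - p x * h' x - q x * h x) / w x) x := by
  refine (((hu.mul hh').sub (hu'.mul hh)).div hw hw0).congr_deriv ?_
  simp only [Pi.mul_apply, Pi.sub_apply]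
  field_simp
  ring

theorem variation_of_parameters {h h' h'' ψ φ : ℝ → ℝ}
    (hu : ∀ x, HasDerivAt u (u' x) x) (hu' : ∀ x, HasDerivAt u' (p x * u' x + q x * u x) x)
    (hv : ∀ x, HasDerivAt v (v' x) x) (hv' : ∀ x, HasDerivAt v' (p x * v' x + q x * v x) x)
    (hw : ∀ x, w x = u' x * v x - u x * v' x) (hw0 : ∀ x, w x ≠ 0)
    (hh : ∀ x, HasDerivAt h (h' x) x) (hh' : ∀ x, HasDerivAt h' (h'' x) x)
    (hψ : ∀ x, ψ x = u x * (h'' x - p x * h' x - q x * h x) / w x)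
    (hφ : ∀ x, φ x = v x * (h'' x - p x * h' x - q x * h x) / w x)
    (hu_lim : Tendsto (fun s => (u s * h' s - u' s * h s) / w s) atBot (𝓝 0))
    (hv_lim : Tendsto (fun s => (v s * h' s - v' s * h s) / w s) atTop (𝓝 0))
    {x : ℝ} (hψ_int : IntegrableOn ψ (Iic x)) (hφ_int : IntegrableOn φ (Ioi x)) :
    h x = -v x * (∫ s in Iic x, ψ s) - u x * ∫ s in Ioi x, φ s := by
  have hw' := hasDerivAt_wronskian hu hu' hv hv' hw
  have hP := integral_Iic_of_hasDerivAt_of_tendsto' (fun s _ =>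
    (hasDerivAt_div_wronskian (hu s) (hu' s) (hh s) (hh' s) (hw' s) (hw0 s)).congr_deriv
      (hψ s).symm) hψ_int hu_lim
  have hQ := integral_Ioi_of_hasDerivAt_of_tendsto' (fun s _ =>
    (hasDerivAt_div_wronskian (hv s) (hv' s) (hh s) (hh' s) (hw' s) (hw0 s)).congr_deriv
      (hφ s).symm) hφ_int hv_lim
  have key : -v x * ((u x * h' x - u' x * h x) / w x - 0) -
      u x * (0 - (v x * h' x - v' x * h x) / w x) = h x * (u' x * v x - u x * v' x) / w x := by
    ring
  rw [hP, hQ, key, ← hw x, mul_div_assoc, div_self (hw0 x), mul_one]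

lemma eq_mul_exp_of_hasDerivAt_mul_sub {κ θ : ℝ}
    (hw : ∀ s, HasDerivAt w (κ * (s - θ) * w s) s) (s : ℝ) :
    w s = w θ * exp (κ / 2 * (s - θ) ^ 2) := by
  have hconst : ∀ s, HasDerivAt (fun s => w s * exp (-(κ / 2 * (s - θ) ^ 2))) 0 s := fun s =>
    ((hw s).mul (((((hasDerivAt_id s).sub_const θ).pow 2).const_mul (κ / 2)).neg.exp)).congr_deriv
      (by simp only [id]; ring)
  have h : w s * exp (-(κ / 2 * (s - θ) ^ 2)) = w θ * exp (-(κ / 2 * (θ - θ) ^ 2)) :=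
    is_const_of_deriv_eq_zero (fun s => (hconst s).differentiableAt) (fun s => (hconst s).deriv) s θ
  simp only [sub_self, ne_eq, OfNat.ofNat_ne_zero, not_false_eq_true, zero_pow, mul_zero,
    neg_zero, exp_zero, mul_one] at h
  rw [← h, mul_assoc, ← exp_add, neg_add_cancel, exp_zero, mul_one]

end SecondOrderLinearODE

section OrnsteinUhlenbeck

variable {ν : ℝ} (k θ : ℝ)

lemma hasDerivAt_halfGaussMoment_comp_mul_sub (hν : 0 < ν) (x : ℝ) :
    HasDerivAt (fun x => halfGaussMoment (ν - 1) (k * (x - θ)))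
      (k * halfGaussMoment ν (k * (x - θ))) x := by
  have h := (hasDerivAt_halfGaussMoment (by linarith : -1 < ν - 1) (k * (x - θ))).comp x
    (((hasDerivAt_id x).sub_const θ).const_mul k)
  rw [sub_add_cancel, mul_one] at h
  exact h.congr_deriv (mul_comm _ _)

/-- With `κ = 2μ/σ²` and `ν = r/μ` this is the equation `σ²/2 u'' + μ (θ - x) u' = r u`. -/
lemma hasDerivAt_mul_halfGaussMoment_comp_mul_sub (hν : 0 < ν) {κ : ℝ} (hκ : k ^ 2 = κ)
    (x : ℝ) :
    HasDerivAt (fun x => k * halfGaussMoment ν (k * (x - θ)))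
      (κ * (x - θ) * (k * halfGaussMoment ν (k * (x - θ))) +
        κ * ν * halfGaussMoment (ν - 1) (k * (x - θ))) x := by
  have h := ((hasDerivAt_halfGaussMoment (by linarith : -1 < ν) (k * (x - θ))).comp x
    (((hasDerivAt_id x).sub_const θ).const_mul k)).const_mul k
  refine h.congr_deriv ?_
  rw [halfGaussMoment_add_one hν, ← hκ]
  ring

lemma integrableOn_halfGaussMoment_comp_mul_sub_mul {s : ℝ} (hs : -1 < s) {ρ : ℝ → ℝ}
    (hρ : Integrable ρ) {S : Set ℝ} (hS : MeasurableSet S) {b : ℝ}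
    (hb : ∀ x ∈ S, k * (x - θ) ≤ b) :
    IntegrableOn (fun x => halfGaussMoment s (k * (x - θ)) * ρ x) S :=
  hρ.integrableOn.bdd_mul
    ((continuous_halfGaussMoment hs).comp (by fun_prop)).aestronglyMeasurable
    (ae_restrict_of_forall_mem hS fun x hx => by
      rw [norm_of_nonneg (halfGaussMoment_nonneg _ _)]
      exact monotone_halfGaussMoment hs (hb x hx))

theorem halfGaussMoment_variation_of_parameters (hk : 0 < k) (hν : 0 < ν) {c : ℝ}
    {w ψ φ : ℝ → ℝ}
    (hw : ∀ x, w x = k * halfGaussMoment ν (k * (x - θ)) * halfGaussMoment (ν - 1) (-k * (x - θ))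
      - halfGaussMoment (ν - 1) (k * (x - θ)) * (-k * halfGaussMoment ν (-k * (x - θ))))
    (hw0 : ∀ x, w x ≠ 0)
    (hψ : ∀ x, ψ x = halfGaussMoment (ν - 1) (k * (x - θ)) *
      (exp x - k ^ 2 * (x - θ) * exp x - k ^ 2 * ν * (exp x - c)) / w x)
    (hφ : ∀ x, φ x = halfGaussMoment (ν - 1) (-k * (x - θ)) *
      (exp x - k ^ 2 * (x - θ) * exp x - k ^ 2 * ν * (exp x - c)) / w x) (x : ℝ) :
    IntegrableOn ψ (Iic x) ∧ IntegrableOn φ (Ioi x) ∧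
      exp x - c = -halfGaussMoment (ν - 1) (-k * (x - θ)) * (∫ s in Iic x, ψ s)
        - halfGaussMoment (ν - 1) (k * (x - θ)) * ∫ s in Ioi x, φ s := by
  have hν₁ : -1 < ν - 1 := by linarith
  have hν₂ : -1 < ν := by linarith
  have hα : 0 < k ^ 2 / 2 := by positivity
  have hud := hasDerivAt_halfGaussMoment_comp_mul_sub k θ hν
  have hvd := hasDerivAt_halfGaussMoment_comp_mul_sub (-k) θ hν
  have hu'd := hasDerivAt_mul_halfGaussMoment_comp_mul_sub k θ hν rfl
  have hv'd := hasDerivAt_mul_halfGaussMoment_comp_mul_sub (-k) θ hν (neg_sq k)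
  have hw_exp := eq_mul_exp_of_hasDerivAt_mul_sub (hasDerivAt_wronskian hud hu'd hvd hv'd hw)
  have hρ : Integrable fun x =>
      (exp x - k ^ 2 * (x - θ) * exp x - k ^ 2 * ν * (exp x - c)) / w x := by
    refine (integrable_div_of_eq_mul_exp_sq hα hw_exp (1 + k ^ 2 * θ - k ^ 2 * ν) (-k ^ 2)
      (k ^ 2 * ν * c)).congr (Eventually.of_forall fun x => ?_)
    ring_nf
  have hψ_int : IntegrableOn ψ (Iic x) :=
    (integrableOn_halfGaussMoment_comp_mul_sub_mul k θ hν₁ hρ measurableSet_Iic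
      (b := k * (x - θ)) fun s (hs : s ≤ x) => by gcongr).congr_fun
      (fun s _ => by rw [hψ, mul_div_assoc]) measurableSet_Iic
  have hφ_int : IntegrableOn φ (Ioi x) :=
    (integrableOn_halfGaussMoment_comp_mul_sub_mul (-k) θ hν₁ hρ measurableSet_Ioi
      (b := -k * (x - θ)) fun s (hs : x < s) => by nlinarith).congr_fun
      (fun s _ => by rw [hφ, mul_div_assoc]) measurableSet_Ioi
  have hbot : Tendsto (fun s => k * (s - θ)) atBot atBot :=
    (tendsto_atBot_add_const_right _ _ tendsto_id).const_mul_atBot hk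
  have htop : Tendsto (fun s => -k * (s - θ)) atTop atBot :=
    (tendsto_atTop_add_const_right _ _ tendsto_id).const_mul_atTop_of_neg (neg_neg_of_pos hk)
  refine ⟨hψ_int, hφ_int, variation_of_parameters hud hu'd hvd hv'd hw hw0
    (fun x => (hasDerivAt_exp x).sub_const c) hasDerivAt_exp hψ hφ ?_ ?_
    hψ_int hφ_int⟩
  · exact tendsto_div_of_eq_mul_exp_sq atBot_le_cocompact
      ((tendsto_halfGaussMoment_atBot hν₁).comp hbot)
      (by simpa using ((tendsto_halfGaussMoment_atBot hν₂).comp hbot).const_mul k) hα hw_exp c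
  · exact tendsto_div_of_eq_mul_exp_sq atTop_le_cocompact
      ((tendsto_halfGaussMoment_atBot hν₁).comp htop)
      (by simpa using ((tendsto_halfGaussMoment_atBot hν₂).comp htop).const_mul (-k)) hα hw_exp c

end OrnsteinUhlenbeck

theorem stmt5_general
    (μ σ θ r c_s : ℝ)
    (hμ : 0 < μ) (hσ : 0 < σ) (hr : 0 < r)
    (F G : ℝ → ℝ)
    (hF : ∀ x : ℝ, F x = ∫ u in Ioi (0:ℝ),
        u ^ (r / μ - 1) * Real.exp (Real.sqrt (2 * μ / σ ^ 2) * (x - θ) * u - u ^ 2 / 2))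
    (hG : ∀ x : ℝ, G x = ∫ u in Ioi (0:ℝ),
        u ^ (r / μ - 1) * Real.exp (Real.sqrt (2 * μ / σ ^ 2) * (θ - x) * u - u ^ 2 / 2))
    (f_s : ℝ → ℝ)
    (hfs : ∀ x : ℝ, f_s x = (μ * θ + σ ^ 2 / 2 - r) - μ * x + r * c_s * Real.exp (-x))
    (W Ψ Φ : ℝ → ℝ)
    (hW : ∀ x, W x = deriv F x * G x - F x * deriv G x)
    (hWpos : ∀ x, 0 < W x)
    (hΨ : ∀ x, Ψ x = 2 * F x / (σ ^ 2 * W x))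
    (hΦ : ∀ x, Φ x = 2 * G x / (σ ^ 2 * W x)) :
    (∀ x : ℝ, IntegrableOn (fun s => Ψ s * Real.exp s * f_s s) (Iic x)) ∧
    (∀ x : ℝ, IntegrableOn (fun s => Φ s * Real.exp s * f_s s) (Ioi x)) ∧
    (∀ x : ℝ, Real.exp x - c_s =
      -G x * (∫ s in Iic x, Ψ s * Real.exp s * f_s s)
        - F x * ∫ s in Ioi x, Φ s * Real.exp s * f_s s) := by
  set k := √(2 * μ / σ ^ 2)
  set ν := r / μ with hν
  have hk : 0 < k := sqrt_pos.2 (by positivity)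
  have hk2 : k ^ 2 = 2 * μ / σ ^ 2 := sq_sqrt (by positivity)
  have hν0 : 0 < ν := div_pos hr hμ
  clear_value k ν
  obtain rfl : F = fun x => halfGaussMoment (ν - 1) (k * (x - θ)) := funext hF
  obtain rfl : G = fun x => halfGaussMoment (ν - 1) (-k * (x - θ)) := by
    ext x
    rw [hG, halfGaussMoment]
    ring_nf
  have hW' : ∀ x, W x = k * halfGaussMoment ν (k * (x - θ)) * halfGaussMoment (ν - 1) (-k * (x - θ))
      - halfGaussMoment (ν - 1) (k * (x - θ)) * (-k * halfGaussMoment ν (-k * (x - θ))) :=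
    fun x => by
      rw [hW, (hasDerivAt_halfGaussMoment_comp_mul_sub k θ hν0 x).deriv,
        (hasDerivAt_halfGaussMoment_comp_mul_sub (-k) θ hν0 x).deriv]
  have hforcing : ∀ s, exp s * f_s s =
      σ ^ 2 / 2 * (exp s - k ^ 2 * (s - θ) * exp s - k ^ 2 * ν * (exp s - c_s)) := fun s => by
    rw [hfs, hk2, hν, exp_neg]
    field_simp
    ring
  have h := halfGaussMoment_variation_of_parameters k θ hk hν0 hW' (fun x => (hWpos x).ne')
    (c := c_s) (ψ := fun s => Ψ s * exp s * f_s s) (φ := fun s => Φ s * exp s * f_s s)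
    (fun s => by rw [hΨ, mul_assoc, hforcing]; field_simp)
    (fun s => by rw [hΦ, mul_assoc, hforcing]; field_simp)
  exact ⟨fun x => (h x).1, fun x => (h x).2.1, fun x => (h x).2.2⟩

/-- For every x, the integrals ∫_{−∞}^x Ψ·e^s·f_s and
∫_x^{+∞} Φ·e^s·f_s converge, and
e^x − c_s = −G(x)·∫_{−∞}^x Ψ(s)e^s f_s(s) ds − F(x)·∫_x^{+∞} Φ(s)e^s f_s(s) ds. -/
theorem stmt5
    (μ σ θ r c_s c_b : ℝ)
    (hμ : 0 < μ) (hσ : 0 < σ) (hr : 0 < r) (hcs : 0 < c_s) (hcb : 0 < c_b)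
    (F G : ℝ → ℝ)
    (hF : ∀ x : ℝ, F x = ∫ u in Ioi (0:ℝ),
        u ^ (r / μ - 1) * Real.exp (Real.sqrt (2 * μ / σ ^ 2) * (x - θ) * u - u ^ 2 / 2))
    (hG : ∀ x : ℝ, G x = ∫ u in Ioi (0:ℝ),
        u ^ (r / μ - 1) * Real.exp (Real.sqrt (2 * μ / σ ^ 2) * (θ - x) * u - u ^ 2 / 2))
    (f_s : ℝ → ℝ)
    (hfs : ∀ x : ℝ, f_s x = (μ * θ + σ ^ 2 / 2 - r) - μ * x + r * c_s * Real.exp (-x))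
    (W Ψ Φ : ℝ → ℝ)
    (hW : ∀ x, W x = deriv F x * G x - F x * deriv G x)
    (hWpos : ∀ x, 0 < W x)
    (hΨ : ∀ x, Ψ x = 2 * F x / (σ ^ 2 * W x))
    (hΦ : ∀ x, Φ x = 2 * G x / (σ ^ 2 * W x)) :
    (∀ x : ℝ, IntegrableOn (fun s => Ψ s * Real.exp s * f_s s) (Iic x)) ∧
    (∀ x : ℝ, IntegrableOn (fun s => Φ s * Real.exp s * f_s s) (Ioi x)) ∧
    (∀ x : ℝ, Real.exp x - c_s =
      -G x * (∫ s in Iic x, Ψ s * Real.exp s * f_s s)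
        - F x * ∫ s in Ioi x, Φ s * Real.exp s * f_s s) :=
  stmt5_general μ σ θ r c_s hμ hσ hr F G hF hG f_s hfs W Ψ Φ hW hWpos hΨ hΦ
end

section
/- There exists a unique b* ∈ ℝ satisfying e^{b*}·F(b*) = (e^{b*} − c_s)·F'(b*). Moreover b* > x_s, b* > ln(c_s), the function x ↦ (e^x − c_s)/F(x) is strictly increasing on (−∞, b*) and strictly decreasing on (b*, +∞); in particular (e^x − c_s)/F(x) ≤ (e^{b*} − c_s)/F(b*) for all x ∈ ℝ. -/
open Real MeasureTheory Set Filter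

/-!
Write `F x = J_p (a (x - θ))`, where `J_q c = ∫₀^∞ u^q e^{cu - u²/2} du` is `tiltedMoment q c`,
`p = r/μ - 1` and `a = √(2μ/σ²)`. Differentiating under the integral gives `J_q' = J_{q+1}`, and
integrating by parts gives `J_{q+2} = (q + 1) J_q + c J_{q+1}`; together they say that `F` solves
`σ²/2 F'' = r F + μ (x - θ) F'`.

The ratio `(e^x - c_s)/F` has derivative `H/F²` with `H = e^x F - (e^x - c_s) F'`. Thanks to the
equation, the integrating factor `e^{-μ(x-θ)²/σ²}` gives
`(H e^{-μ(x-θ)²/σ²})' = 2 e^x F f_s(x) / σ² · e^{-μ(x-θ)²/σ²}`, and `f_s` is strictly decreasing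
with root `x_s`, so `H e^{-μ(x-θ)²/σ²}` increases up to `x_s` and decreases afterwards. It is
positive for `x ≤ log c_s` and negative far to the right, because `J_{p+1}/J_p → ∞`. Hence `H`
changes sign exactly once, at some `b* > max x_s (log c_s)`, which is the unique maximiser of the
ratio.
-/

noncomputable def tiltedIntegrand (q c u : ℝ) : ℝ := u ^ q * exp (c * u - u ^ 2 / 2)

noncomputable def tiltedMoment (q c : ℝ) : ℝ := ∫ u in Ioi 0, tiltedIntegrand q c u

section TiltedMoment

variable {q : ℝ}

lemma tiltedIntegrand_nonneg (q c : ℝ) {u : ℝ} (hu : 0 ≤ u) : 0 ≤ tiltedIntegrand q c u := by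
  unfold tiltedIntegrand; positivity

lemma tiltedIntegrand_pos (q c : ℝ) {u : ℝ} (hu : 0 < u) : 0 < tiltedIntegrand q c u := by
  unfold tiltedIntegrand; positivity

lemma tiltedIntegrand_eq_exp_mul (q c u : ℝ) :
    tiltedIntegrand q c u = exp (c * u) * tiltedIntegrand q 0 u := by
  unfold tiltedIntegrand
  rw [zero_mul, zero_sub, mul_left_comm, ← exp_add]
  ring_nf

lemma tiltedIntegrand_add_one (q c : ℝ) {u : ℝ} (hu : 0 < u) :
    tiltedIntegrand (q + 1) c u = u * tiltedIntegrand q c u := by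
  unfold tiltedIntegrand; rw [rpow_add_one hu.ne']; ring

lemma tiltedIntegrand_le_exp_sq_mul (q c : ℝ) {u : ℝ} (hu : 0 ≤ u) :
    tiltedIntegrand q c u ≤ exp (c ^ 2) * (u ^ q * exp (-(1 / 4) * u ^ 2)) := by
  have hexp : c * u - u ^ 2 / 2 ≤ c ^ 2 + -(1 / 4) * u ^ 2 := by
    nlinarith [sq_nonneg (c - u / 2)]
  calc tiltedIntegrand q c u ≤ u ^ q * exp (c ^ 2 + -(1 / 4) * u ^ 2) := by
        unfold tiltedIntegrand; gcongr
    _ = exp (c ^ 2) * (u ^ q * exp (-(1 / 4) * u ^ 2)) := by rw [exp_add]; ring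

lemma continuousOn_tiltedIntegrand (q c : ℝ) : ContinuousOn (tiltedIntegrand q c) (Ioi 0) :=
  fun u hu => ((continuousAt_rpow_const u q (Or.inl (ne_of_gt hu))).mul
    (continuous_exp.continuousAt.comp (by fun_prop))).continuousWithinAt

lemma integrableOn_tiltedIntegrand (hq : -1 < q) (c : ℝ) :
    IntegrableOn (tiltedIntegrand q c) (Ioi 0) := by
  refine Integrable.mono'
    ((integrableOn_rpow_mul_exp_neg_mul_sq (by norm_num : (0 : ℝ) < 1 / 4) hq).const_mul
      (exp (c ^ 2)))
    ((continuousOn_tiltedIntegrand q c).aestronglyMeasurable measurableSet_Ioi) ?_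
  filter_upwards [ae_restrict_mem measurableSet_Ioi] with u (hu : 0 < u)
  rw [norm_of_nonneg (tiltedIntegrand_nonneg q c hu.le)]
  exact tiltedIntegrand_le_exp_sq_mul q c hu.le

lemma setIntegral_Ioi_tiltedIntegrand_pos (hq : -1 < q) (c : ℝ) {M : ℝ} (hM : 0 ≤ M) :
    0 < ∫ u in Ioi M, tiltedIntegrand q c u := by
  have hsub : Ioi M ⊆ Ioi 0 := Ioi_subset_Ioi hM
  rw [setIntegral_pos_iff_support_of_nonneg_ae
    (ae_restrict_of_forall_mem measurableSet_Ioi fun u hu => tiltedIntegrand_nonneg q c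
      (hsub hu).out.le)
    ((integrableOn_tiltedIntegrand hq c).mono_set hsub)]
  have hsupp : Ioi M ⊆ Function.support (tiltedIntegrand q c) ∩ Ioi M :=
    fun u hu => ⟨(tiltedIntegrand_pos q c (hsub hu)).ne', hu⟩
  exact (Measure.measure_Ioi_pos volume M).trans_le (measure_mono hsupp)

lemma setIntegral_Ioi_tiltedIntegrand_anti (hq : -1 < q) (c : ℝ) {M M' : ℝ} (hM' : 0 ≤ M')
    (hM'M : M' ≤ M) : ∫ u in Ioi M, tiltedIntegrand q c u ≤ ∫ u in Ioi M', tiltedIntegrand q c u :=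
  setIntegral_mono_set ((integrableOn_tiltedIntegrand hq c).mono_set (Ioi_subset_Ioi hM'))
    (ae_restrict_of_forall_mem measurableSet_Ioi fun _ hu => tiltedIntegrand_nonneg q c
      (hM'.trans hu.out.le))
    (Ioi_subset_Ioi hM'M).eventuallyLE

lemma setIntegral_Ioc_tiltedIntegrand_le (hq : -1 < q) {c : ℝ} (hc : 0 ≤ c) (M : ℝ) :
    ∫ u in Ioc 0 M, tiltedIntegrand q c u ≤
      exp (c * M) * ∫ u in Ioc 0 M, tiltedIntegrand q 0 u := by
  rw [← integral_const_mul]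
  refine setIntegral_mono_on ((integrableOn_tiltedIntegrand hq c).mono_set Ioc_subset_Ioi_self)
    (((integrableOn_tiltedIntegrand hq 0).mono_set Ioc_subset_Ioi_self).const_mul _)
    measurableSet_Ioc fun u hu => ?_
  rw [tiltedIntegrand_eq_exp_mul q c u]
  gcongr
  · exact tiltedIntegrand_nonneg q 0 hu.1.le
  · exact hu.2

lemma exp_mul_le_setIntegral_Ioi_tiltedIntegrand (hq : -1 < q) {c M : ℝ} (hc : 0 ≤ c)
    (hM : 0 ≤ M) :
    exp (c * M) * ∫ u in Ioi M, tiltedIntegrand q 0 u ≤ ∫ u in Ioi M, tiltedIntegrand q c u := by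
  have hsub : Ioi M ⊆ Ioi 0 := Ioi_subset_Ioi hM
  rw [← integral_const_mul]
  refine setIntegral_mono_on (((integrableOn_tiltedIntegrand hq 0).mono_set hsub).const_mul _)
    ((integrableOn_tiltedIntegrand hq c).mono_set hsub) measurableSet_Ioi fun u hu => ?_
  rw [tiltedIntegrand_eq_exp_mul q c u]
  gcongr
  · exact tiltedIntegrand_nonneg q 0 (hsub hu).out.le
  · exact hu.out.le

lemma tiltedMoment_pos (hq : -1 < q) (c : ℝ) : 0 < tiltedMoment q c :=
  setIntegral_Ioi_tiltedIntegrand_pos hq c le_rfl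

theorem hasDerivAt_tiltedMoment (hq : -1 < q) (c : ℝ) :
    HasDerivAt (tiltedMoment q) (tiltedMoment (q + 1) c) c := by
  have hmeas : ∀ c', AEStronglyMeasurable (tiltedIntegrand q c') (volume.restrict (Ioi 0)) :=
    fun c' => (continuousOn_tiltedIntegrand q c').aestronglyMeasurable measurableSet_Ioi
  -- for `c' ∈ ball c 1` the `c'`-derivative `u^{q+1} e^{c'u - u²/2}` of the integrand is
  -- dominated by `u^{q+1} e^{(c+1)u - u²/2}`
  refine (hasDerivAt_integral_of_dominated_loc_of_deriv_le (x₀ := c)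
    (F' := fun c' u => tiltedIntegrand (q + 1) c' u) (bound := tiltedIntegrand (q + 1) (c + 1))
    (Metric.ball_mem_nhds c one_pos) (Eventually.of_forall hmeas)
    (integrableOn_tiltedIntegrand hq c)
    ((continuousOn_tiltedIntegrand (q + 1) c).aestronglyMeasurable measurableSet_Ioi) ?_
    (integrableOn_tiltedIntegrand (by linarith) (c + 1)) ?_).2
  · filter_upwards [ae_restrict_mem measurableSet_Ioi] with u (hu : 0 < u) c' hc'
    have hc'1 : c' < c + 1 := by
      have := abs_lt.mp (mem_ball_iff_norm.mp hc'); linarith [this.2]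
    rw [norm_of_nonneg (tiltedIntegrand_nonneg _ _ hu.le)]
    unfold tiltedIntegrand
    gcongr
  · filter_upwards [ae_restrict_mem measurableSet_Ioi] with u (hu : 0 < u) c' _
    have hlin : HasDerivAt (fun c' => c' * u - u ^ 2 / 2) u c' := by
      simpa using ((hasDerivAt_id c').mul_const u).sub_const (u ^ 2 / 2)
    refine (hlin.exp.const_mul (u ^ q)).congr_deriv ?_
    rw [tiltedIntegrand_add_one q c' hu]
    unfold tiltedIntegrand
    ring

lemma hasDerivAt_tiltedMoment_comp_affine (hq : -1 < q) (a θ x : ℝ) :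
    HasDerivAt (fun y => tiltedMoment q (a * (y - θ)))
      (a * tiltedMoment (q + 1) (a * (x - θ))) x :=
  ((hasDerivAt_tiltedMoment hq _).comp x
    (((hasDerivAt_id' x).sub_const θ).const_mul a)).congr_deriv (by ring)

theorem tiltedMoment_add_two (hq : -1 < q) (c : ℝ) :
    tiltedMoment (q + 2) c = (q + 1) * tiltedMoment q c + c * tiltedMoment (q + 1) c := by
  have hq1 : 0 < q + 1 := by linarith
  have hint₀ := integrableOn_tiltedIntegrand hq c
  have hint₁ := integrableOn_tiltedIntegrand (q := q + 1) (by linarith) c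
  have hint₂ := integrableOn_tiltedIntegrand (q := q + 2) (by linarith) c
  set g' : ℝ → ℝ := fun u => (q + 1) * tiltedIntegrand q c u + c * tiltedIntegrand (q + 1) c u -
    tiltedIntegrand (q + 2) c u
  have hderiv : ∀ u ∈ Ioi (0 : ℝ), HasDerivAt (tiltedIntegrand (q + 1) c) (g' u) u := by
    intro u (hu : 0 < u)
    have hpow : HasDerivAt (fun u : ℝ => u ^ (q + 1)) ((q + 1) * u ^ q) u := by
      simpa using hasDerivAt_rpow_const (p := q + 1) (Or.inl hu.ne')
    have hexp : HasDerivAt (fun u => exp (c * u - u ^ 2 / 2))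
        (exp (c * u - u ^ 2 / 2) * (c - u)) u :=
      (((hasDerivAt_id u).const_mul c).sub ((hasDerivAt_pow 2 u).div_const 2)).exp.congr_deriv
        (by simp)
    refine (hpow.mul hexp).congr_deriv ?_
    simp only [g', show q + 2 = q + 1 + 1 by ring, tiltedIntegrand_add_one _ c hu]
    unfold tiltedIntegrand
    rw [rpow_add_one hu.ne']
    ring
  have hint : IntegrableOn (fun u => (q + 1) * tiltedIntegrand q c u +
      c * tiltedIntegrand (q + 1) c u) (Ioi 0) :=
    (hint₀.const_mul _).add (hint₁.const_mul c)
  have hg'int : IntegrableOn g' (Ioi 0) := hint.sub hint₂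
  -- integration by parts; the boundary term vanishes at `0` because `q + 1 > 0`
  have hibp : ∫ u in Ioi 0, g' u = 0 := by
    rw [integral_Ioi_of_hasDerivAt_of_tendsto ?_ hderiv hg'int
      (tendsto_zero_of_hasDerivAt_of_integrableOn_Ioi hderiv hg'int hint₁)]
    · simp [tiltedIntegrand, zero_rpow hq1.ne']
    · exact ((continuousAt_rpow_const 0 (q + 1) (Or.inr hq1.le)).mul
        (continuous_exp.continuousAt.comp (by fun_prop))).continuousWithinAt
  rw [integral_sub hint hint₂, integral_add (hint₀.const_mul _) (hint₁.const_mul c),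
    integral_const_mul, integral_const_mul] at hibp
  unfold tiltedMoment
  linarith

lemma mul_setIntegral_Ioi_le_tiltedMoment_add_one (hq : -1 < q) (c : ℝ) {M : ℝ} (hM : 0 ≤ M) :
    M * ∫ u in Ioi M, tiltedIntegrand q c u ≤ tiltedMoment (q + 1) c := by
  have hsub : Ioi M ⊆ Ioi 0 := Ioi_subset_Ioi hM
  have hq1 : -1 < q + 1 := by linarith
  rw [← integral_const_mul]
  calc ∫ u in Ioi M, M * tiltedIntegrand q c u
      ≤ ∫ u in Ioi M, tiltedIntegrand (q + 1) c u := by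
        refine setIntegral_mono_on
          (((integrableOn_tiltedIntegrand hq c).mono_set hsub).const_mul M)
          ((integrableOn_tiltedIntegrand hq1 c).mono_set hsub) measurableSet_Ioi fun u hu => ?_
        rw [tiltedIntegrand_add_one q c (hsub hu)]
        exact mul_le_mul_of_nonneg_right hu.out.le (tiltedIntegrand_nonneg q c (hsub hu).out.le)
    _ ≤ tiltedMoment (q + 1) c := setIntegral_Ioi_tiltedIntegrand_anti hq1 c le_rfl hM

theorem eventually_mul_tiltedMoment_le (hq : -1 < q) {K : ℝ} (hK : 0 < K) :
    ∀ᶠ c in atTop, K * tiltedMoment q c ≤ tiltedMoment (q + 1) c := by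
  set M := 2 * K
  have hM : 0 < M := by positivity
  set N := ∫ u in Ioc 0 M, tiltedIntegrand q 0 u
  set P := ∫ u in Ioi (2 * M), tiltedIntegrand q 0 u
  have hgrow : Tendsto (fun c => exp (c * M) * P) atTop atTop :=
    (tendsto_exp_atTop.comp (tendsto_id.atTop_mul_const hM)).atTop_mul_const
      (setIntegral_Ioi_tiltedIntegrand_pos hq 0 (by positivity))
  filter_upwards [hgrow.eventually_ge_atTop N, eventually_ge_atTop 0] with c hN hc
  set S := ∫ u in Ioi M, tiltedIntegrand q c u
  have hsplit : tiltedMoment q c = (∫ u in Ioc 0 M, tiltedIntegrand q c u) + S := by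
    rw [tiltedMoment, ← Ioc_union_Ioi_eq_Ioi hM.le, setIntegral_union (Ioc_disjoint_Ioi le_rfl)
      measurableSet_Ioi ((integrableOn_tiltedIntegrand hq c).mono_set Ioc_subset_Ioi_self)
      ((integrableOn_tiltedIntegrand hq c).mono_set (Ioi_subset_Ioi hM.le))]
  -- the mass on `(0, M]` grows at most like `e^{cM}`, the mass beyond `2M` at least like `e^{2cM}`
  have hnear : ∫ u in Ioc 0 M, tiltedIntegrand q c u ≤ S := calc
    _ ≤ exp (c * M) * N := setIntegral_Ioc_tiltedIntegrand_le hq hc M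
    _ ≤ exp (c * M) * (exp (c * M) * P) := by gcongr
    _ = exp (c * (2 * M)) * P := by rw [← mul_assoc, ← exp_add]; ring_nf
    _ ≤ ∫ u in Ioi (2 * M), tiltedIntegrand q c u :=
        exp_mul_le_setIntegral_Ioi_tiltedIntegrand hq hc (by positivity)
    _ ≤ S := setIntegral_Ioi_tiltedIntegrand_anti hq c hM.le (by linarith)
  calc K * tiltedMoment q c ≤ M * S := by rw [hsplit]; nlinarith
    _ ≤ tiltedMoment (q + 1) c := mul_setIntegral_Ioi_le_tiltedMoment_add_one hq c hM.le

end TiltedMoment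

lemma strictMonoOn_Iic_and_strictAntiOn_Ici_of_hasDerivAt {f f' : ℝ → ℝ} {b : ℝ}
    (hf : ∀ x, HasDerivAt f (f' x) x) (hpos : ∀ x < b, 0 < f' x)
    (hneg : ∀ x, b < x → f' x < 0) :
    StrictMonoOn f (Iic b) ∧ StrictAntiOn f (Ici b) := by
  have hcont : Continuous f := continuous_iff_continuousAt.2 fun x => (hf x).continuousAt
  refine ⟨strictMonoOn_of_deriv_pos (convex_Iic b) hcont.continuousOn fun x hx => ?_,
    strictAntiOn_of_deriv_neg (convex_Ici b) hcont.continuousOn fun x hx => ?_⟩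
  · rw [(hf x).deriv]; exact hpos x (by simpa using hx)
  · rw [(hf x).deriv]; exact hneg x (by simpa using hx)

lemma StrictMonoOn.le_of_strictAntiOn_Ici {f : ℝ → ℝ} {b : ℝ} (hmono : StrictMonoOn f (Iic b))
    (hanti : StrictAntiOn f (Ici b)) (x : ℝ) : f x ≤ f b := by
  rcases le_total x b with h | h
  · exact hmono.monotoneOn h self_mem_Iic h
  · exact hanti.antitoneOn self_mem_Ici h h

lemma exists_pos_neg_of_strictMonoOn_Iic_of_strictAntiOn_Ici {f : ℝ → ℝ} {m l x₀ : ℝ}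
    (hf : Continuous f) (hmono : StrictMonoOn f (Iic m)) (hanti : StrictAntiOn f (Ici m))
    (hpos : ∀ x ≤ l, 0 < f x) (hx₀ : f x₀ < 0) :
    ∃ b, m < b ∧ l < b ∧ f b = 0 ∧ (∀ x < b, 0 < f x) ∧ ∀ x, b < x → f x < 0 := by
  have hle : ∀ x ≤ max m l, 0 < f x := by
    intro x hx
    rcases le_or_gt x l with hxl | hxl
    · exact hpos x hxl
    · have hxm : x ≤ m := by simpa [hxl.not_ge] using hx
      exact (hpos l le_rfl).trans (hmono (hxl.le.trans hxm) hxm hxl)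
  have hx₀max : max m l < x₀ := lt_of_not_ge fun h => (hle x₀ h).not_gt hx₀
  obtain ⟨b, ⟨hb, -⟩, hb0⟩ :=
    intermediate_value_Ioo' hx₀max.le hf.continuousOn ⟨hx₀, hle _ le_rfl⟩
  have hmb : m ≤ b := (le_max_left m l).trans hb.le
  refine ⟨b, (le_max_left m l).trans_lt hb, (le_max_right m l).trans_lt hb, hb0,
    fun x hx => ?_, fun x hx => hb0 ▸ hanti hmb (mem_Ici.2 (hmb.trans hx.le)) hx⟩
  rcases le_or_gt x (max m l) with h | h
  · exact hle x h
  · exact hb0 ▸ hanti (mem_Ici.2 ((le_max_left m l).trans h.le)) hmb hx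

section SmoothFit

variable {μ σ θ r c x_s : ℝ} {F F' F'' : ℝ → ℝ} {x : ℝ}

noncomputable def smoothFitGap (c : ℝ) (F F' : ℝ → ℝ) (x : ℝ) : ℝ :=
  exp x * F x - (exp x - c) * F' x

lemma hasDerivAt_exp_sub_div (hF : HasDerivAt F (F' x) x) (hFx : F x ≠ 0) :
    HasDerivAt (fun y => (exp y - c) / F y) (smoothFitGap c F F' x / F x ^ 2) x :=
  ((hasDerivAt_exp x).sub_const c).div hF hFx

lemma smoothFitGap_pos_of_le_log (hc : 0 < c) (hF : 0 < F x) (hF' : 0 ≤ F' x)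
    (hx : x ≤ log c) : 0 < smoothFitGap c F F' x := by
  have hex : exp x ≤ c := (exp_le_exp.2 hx).trans_eq (exp_log hc)
  unfold smoothFitGap
  nlinarith [mul_nonneg (sub_nonneg.2 hex) hF', mul_pos (exp_pos x) hF]

lemma exists_smoothFitGap_neg (hF' : ∀ x, 0 < F' x) (htail : ∀ᶠ x in atTop, 2 * F x ≤ F' x) :
    ∃ x, smoothFitGap c F F' x < 0 := by
  obtain ⟨x, hx, hexp⟩ := (htail.and (tendsto_exp_atTop.eventually_gt_atTop (2 * c))).exists
  refine ⟨x, ?_⟩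
  unfold smoothFitGap
  nlinarith [mul_le_mul_of_nonneg_left hx (exp_pos x).le, hF' x]

lemma hasDerivAt_smoothFitGap_mul_exp (hσ : σ ≠ 0) (hF : HasDerivAt F (F' x) x)
    (hF' : HasDerivAt F' (F'' x) x)
    (hode : σ ^ 2 / 2 * F'' x = r * F x + μ * (x - θ) * F' x) :
    HasDerivAt (fun y => smoothFitGap c F F' y * exp (-(μ * (y - θ) ^ 2 / σ ^ 2)))
      (2 * exp x * F x / σ ^ 2 * ((μ * θ + σ ^ 2 / 2 - r) - μ * x + r * c * exp (-x)) *
        exp (-(μ * (x - θ) ^ 2 / σ ^ 2))) x := by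
  have hgap : HasDerivAt (smoothFitGap c F F') (exp x * F x - (exp x - c) * F'' x) x :=
    (((hasDerivAt_exp x).mul hF).sub (((hasDerivAt_exp x).sub_const c).mul hF')).congr_deriv
      (by ring)
  have hQ : HasDerivAt (fun y => -(μ * (y - θ) ^ 2 / σ ^ 2)) (-(2 * μ * (x - θ) / σ ^ 2)) x := by
    refine (((((hasDerivAt_id' x).sub_const θ).pow 2).const_mul μ).div_const (σ ^ 2)).neg
      |>.congr_deriv ?_
    push_cast; ring
  have hF'' : F'' x = 2 * (r * F x + μ * (x - θ) * F' x) / σ ^ 2 := by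
    field_simp; linarith
  refine (hgap.mul hQ.exp).congr_deriv ?_
  unfold smoothFitGap
  rw [hF'', exp_neg x]
  field_simp
  ring

theorem exists_smoothFitGap_sign_change (hμ : 0 < μ) (hσ : σ ≠ 0) (hr : 0 ≤ r) (hc : 0 < c)
    (hF : ∀ x, HasDerivAt F (F' x) x) (hF' : ∀ x, HasDerivAt F' (F'' x) x)
    (hode : ∀ x, σ ^ 2 / 2 * F'' x = r * F x + μ * (x - θ) * F' x)
    (hFpos : ∀ x, 0 < F x) (hF'pos : ∀ x, 0 < F' x) (htail : ∀ᶠ x in atTop, 2 * F x ≤ F' x)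
    (hxs : (μ * θ + σ ^ 2 / 2 - r) - μ * x_s + r * c * exp (-x_s) = 0) :
    ∃ b, x_s < b ∧ log c < b ∧ smoothFitGap c F F' b = 0 ∧
      (∀ x < b, 0 < smoothFitGap c F F' x) ∧ ∀ x, b < x → smoothFitGap c F F' x < 0 := by
  have hdrift : ∀ x y, x < y → (μ * θ + σ ^ 2 / 2 - r) - μ * y + r * c * exp (-y) <
      (μ * θ + σ ^ 2 / 2 - r) - μ * x + r * c * exp (-x) := fun x y hxy => by
    nlinarith [exp_lt_exp.2 (neg_lt_neg hxy), mul_nonneg hr hc.le]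
  have hweight : ∀ x, 0 < 2 * exp x * F x / σ ^ 2 * exp (-(μ * (x - θ) ^ 2 / σ ^ 2)) :=
    fun x => by have := hFpos x; positivity
  have hΦ := fun x => hasDerivAt_smoothFitGap_mul_exp (c := c) hσ (hF x) (hF' x) (hode x)
  obtain ⟨hmono, hanti⟩ := strictMonoOn_Iic_and_strictAntiOn_Ici_of_hasDerivAt (b := x_s) hΦ
    (fun x hx => by
      rw [mul_right_comm]; exact mul_pos (hweight x) (hxs ▸ hdrift x x_s hx))
    (fun x hx => by
      rw [mul_right_comm]; exact mul_neg_of_pos_of_neg (hweight x) (hxs ▸ hdrift x_s x hx))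
  obtain ⟨x₀, hx₀⟩ := exists_smoothFitGap_neg hF'pos htail
  obtain ⟨b, hxsb, hlogb, hb, hpos, hneg⟩ := exists_pos_neg_of_strictMonoOn_Iic_of_strictAntiOn_Ici
    (continuous_iff_continuousAt.2 fun x => (hΦ x).continuousAt) hmono hanti
    (fun x hx => mul_pos (smoothFitGap_pos_of_le_log hc (hFpos x) (hF'pos x).le hx) (exp_pos _))
    (mul_neg_of_neg_of_pos hx₀ (exp_pos _))
  exact ⟨b, hxsb, hlogb, (mul_eq_zero.1 hb).resolve_right (exp_pos _).ne',
    fun x hx => pos_of_mul_pos_left (hpos x hx) (exp_pos _).le,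
    fun x hx => neg_of_mul_neg_left (hneg x hx) (exp_pos _).le⟩

theorem exists_unique_smoothFit_of_ode (hμ : 0 < μ) (hσ : σ ≠ 0) (hr : 0 ≤ r) (hc : 0 < c)
    (hF : ∀ x, HasDerivAt F (F' x) x) (hF' : ∀ x, HasDerivAt F' (F'' x) x)
    (hode : ∀ x, σ ^ 2 / 2 * F'' x = r * F x + μ * (x - θ) * F' x)
    (hFpos : ∀ x, 0 < F x) (hF'pos : ∀ x, 0 < F' x) (htail : ∀ᶠ x in atTop, 2 * F x ≤ F' x)
    (hxs : (μ * θ + σ ^ 2 / 2 - r) - μ * x_s + r * c * exp (-x_s) = 0) :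
    ∃ b : ℝ, (exp b * F b = (exp b - c) * deriv F b) ∧
      (∀ b', exp b' * F b' = (exp b' - c) * deriv F b' → b' = b) ∧
      x_s < b ∧ log c < b ∧
      StrictMonoOn (fun x => (exp x - c) / F x) (Iio b) ∧
      StrictAntiOn (fun x => (exp x - c) / F x) (Ioi b) ∧
      (∀ x, (exp x - c) / F x ≤ (exp b - c) / F b) := by
  obtain ⟨b, hxsb, hlogb, hb, hpos, hneg⟩ :=
    exists_smoothFitGap_sign_change hμ hσ hr hc hF hF' hode hFpos hF'pos htail hxs
  obtain ⟨hmono, hanti⟩ := strictMonoOn_Iic_and_strictAntiOn_Ici_of_hasDerivAt (b := b)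
    (fun x => hasDerivAt_exp_sub_div (c := c) (hF x) (hFpos x).ne')
    (fun x hx => div_pos (hpos x hx) (pow_pos (hFpos x) 2))
    (fun x hx => div_neg_of_neg_of_pos (hneg x hx) (pow_pos (hFpos x) 2))
  have hgap : ∀ x, exp x * F x = (exp x - c) * deriv F x ↔ x = b := by
    intro x
    rw [(hF x).deriv, ← sub_eq_zero, ← smoothFitGap]
    refine ⟨fun h => ?_, fun h => h ▸ hb⟩
    rcases lt_trichotomy x b with hxb | hxb | hxb
    · exact absurd h (hpos x hxb).ne'
    · exact hxb
    · exact absurd h (hneg x hxb).ne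
  exact ⟨b, (hgap b).2 rfl, fun b' => (hgap b').1, hxsb, hlogb, hmono.mono Iio_subset_Iic_self,
    hanti.mono Ioi_subset_Ici_self, hmono.le_of_strictAntiOn_Ici hanti⟩

end SmoothFit

theorem stmt9_general
    (μ σ θ r c_s : ℝ)
    (hμ : 0 < μ) (hσ : 0 < σ) (hr : 0 < r) (hcs : 0 < c_s)
    (F : ℝ → ℝ)
    (hF : ∀ x : ℝ, F x = ∫ u in Ioi (0:ℝ),
        u ^ (r / μ - 1) * Real.exp (Real.sqrt (2 * μ / σ ^ 2) * (x - θ) * u - u ^ 2 / 2))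
    (f_s : ℝ → ℝ)
    (hfs : ∀ x : ℝ, f_s x = (μ * θ + σ ^ 2 / 2 - r) - μ * x + r * c_s * Real.exp (-x))
    (x_s : ℝ) (hxs : f_s x_s = 0) :
    ∃ b : ℝ, (Real.exp b * F b = (Real.exp b - c_s) * deriv F b) ∧
      (∀ b', Real.exp b' * F b' = (Real.exp b' - c_s) * deriv F b' → b' = b) ∧
      x_s < b ∧ Real.log c_s < b ∧
      StrictMonoOn (fun x => (Real.exp x - c_s) / F x) (Iio b) ∧
      StrictAntiOn (fun x => (Real.exp x - c_s) / F x) (Ioi b) ∧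
      (∀ x, (Real.exp x - c_s) / F x ≤ (Real.exp b - c_s) / F b) := by
  have hσ2 : 0 < 2 * μ / σ ^ 2 := by positivity
  set a := √(2 * μ / σ ^ 2)
  have ha : 0 < a := sqrt_pos.2 hσ2
  set p := r / μ - 1
  have hp : -1 < p := by have := div_pos hr hμ; linarith
  obtain rfl : F = fun x => tiltedMoment p (a * (x - θ)) := funext hF
  refine exists_unique_smoothFit_of_ode hμ hσ.ne' hr.le hcs
    (hasDerivAt_tiltedMoment_comp_affine hp a θ)
    (fun x => (hasDerivAt_tiltedMoment_comp_affine (by linarith) a θ x).const_mul a)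
    (fun x => ?_) (fun x => tiltedMoment_pos hp _)
    (fun x => mul_pos ha (tiltedMoment_pos (by linarith) _)) ?_ ((hfs x_s).symm.trans hxs)
  · have ha2 : σ ^ 2 / 2 * a ^ 2 = μ := by rw [sq_sqrt hσ2.le]; field_simp
    have hμp : μ * (p + 1) = r := by simp only [p]; field_simp; ring
    rw [show p + 1 + 1 = p + 2 by ring, tiltedMoment_add_two hp]
    linear_combination ((p + 1) * tiltedMoment p (a * (x - θ)) +
      a * (x - θ) * tiltedMoment (p + 1) (a * (x - θ))) * ha2 + tiltedMoment p (a * (x - θ)) * hμp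
  · have hlin : Tendsto (fun x => a * (x - θ)) atTop atTop := by
      simpa only [sub_eq_add_neg, id] using
        (tendsto_atTop_add_const_right _ (-θ) tendsto_id).const_mul_atTop ha
    filter_upwards [hlin.eventually (eventually_mul_tiltedMoment_le hp (div_pos two_pos ha))]
      with x hx
    calc 2 * tiltedMoment p (a * (x - θ)) = a * (2 / a * tiltedMoment p (a * (x - θ))) := by
          field_simp
      _ ≤ a * tiltedMoment (p + 1) (a * (x - θ)) := by gcongr

/-- There is a unique b* with e^{b*}F(b*) = (e^{b*} − c_s)F'(b*);
moreover b* > x_s, b* > ln c_s, x ↦ (e^x − c_s)/F(x) is strictly increasing on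
(−∞, b*), strictly decreasing on (b*, +∞), and maximized at b*. -/
theorem stmt9
    (μ σ θ r c_s c_b : ℝ)
    (hμ : 0 < μ) (hσ : 0 < σ) (hr : 0 < r) (hcs : 0 < c_s) (hcb : 0 < c_b)
    (F : ℝ → ℝ)
    (hF : ∀ x : ℝ, F x = ∫ u in Ioi (0:ℝ),
        u ^ (r / μ - 1) * Real.exp (Real.sqrt (2 * μ / σ ^ 2) * (x - θ) * u - u ^ 2 / 2))
    (f_s : ℝ → ℝ)
    (hfs : ∀ x : ℝ, f_s x = (μ * θ + σ ^ 2 / 2 - r) - μ * x + r * c_s * Real.exp (-x))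
    (x_s : ℝ) (hxs : f_s x_s = 0) (hxs_uniq : ∀ y, f_s y = 0 → y = x_s) :
    ∃ b : ℝ, (Real.exp b * F b = (Real.exp b - c_s) * deriv F b) ∧
      (∀ b', Real.exp b' * F b' = (Real.exp b' - c_s) * deriv F b' → b' = b) ∧
      x_s < b ∧ Real.log c_s < b ∧
      StrictMonoOn (fun x => (Real.exp x - c_s) / F x) (Iio b) ∧
      StrictAntiOn (fun x => (Real.exp x - c_s) / F x) (Ioi b) ∧
      (∀ x, (Real.exp x - c_s) / F x ≤ (Real.exp b - c_s) / F b) :=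
  stmt9_general μ σ θ r c_s hμ hσ hr hcs F hF f_s hfs x_s hxs
end

section
/- The function H is convex on (0, ψ(x_s)] and concave on [ψ(x_s), +∞). -/
/-!
`F` and `G` are positive solutions of the Ornstein–Uhlenbeck equation
`σ²/2 f'' + μ (θ - x) f' = r f` (differentiate under the integral sign, then integrate by
parts), and their Wronskian `W = F'G - FG'` is positive, so `ψ = F / G` is increasing.
For a payoff `h` and `x = ψ⁻¹ z`, the transform `H z = h x / G x` has `H' z = W(h, G) x / W x`,
and Abel's identity for `W` turns the next derivative into
`H'' z = G(x)³ (h'' - β h' - γ h)(x) / W(x)²`, where `f'' = β f' + γ f` is the normalized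
equation. For `h x = eˣ - c_s` the bracket is `2/σ² eˣ f_s(x)`, and `f_s` is strictly decreasing
with root `x_s`.
-/

open Real MeasureTheory Set Filter Topology

/-- `Γ(q + 1) e^{c²/4} D_{-q-1}(-c)` in terms of the parabolic cylinder function `D`. -/
noncomputable def parabolicCylinderIntegral (q c : ℝ) : ℝ :=
  ∫ u in Ioi (0 : ℝ), u ^ q * exp (c * u - u ^ 2 / 2)

theorem integrableOn_rpow_mul_exp_mul_sub_sq {q : ℝ} (hq : -1 < q) (c : ℝ) :
    IntegrableOn (fun u : ℝ => u ^ q * exp (c * u - u ^ 2 / 2)) (Ioi 0) := by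
  have hmeas : AEStronglyMeasurable (fun u : ℝ => u ^ q * exp (c * u - u ^ 2 / 2))
      (volume.restrict (Ioi 0)) :=
    ((continuousOn_id.rpow_const fun u hu => Or.inl (ne_of_gt hu)).mul
      (by fun_prop)).aestronglyMeasurable measurableSet_Ioi
  refine ((integrableOn_rpow_mul_exp_neg_mul_sq (b := 1 / 4) (by norm_num) hq).const_mul
    (exp (c ^ 2))).mono' hmeas ?_
  filter_upwards [ae_restrict_mem measurableSet_Ioi] with u (hu : 0 < u)
  rw [norm_of_nonneg (by positivity), mul_left_comm, ← exp_add]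
  gcongr
  nlinarith [sq_nonneg (c - u / 2)]

theorem parabolicCylinderIntegral_pos {q : ℝ} (hq : -1 < q) (c : ℝ) :
    0 < parabolicCylinderIntegral q c := by
  have hnonneg :
      0 ≤ᵐ[volume.restrict (Ioi 0)] fun u : ℝ => u ^ q * exp (c * u - u ^ 2 / 2) := by
    filter_upwards [ae_restrict_mem measurableSet_Ioi] with u (hu : 0 < u)
    positivity
  rw [parabolicCylinderIntegral,
    setIntegral_pos_iff_support_of_nonneg_ae hnonneg (integrableOn_rpow_mul_exp_mul_sub_sq hq c)]
  have hsupp :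
      Function.support (fun u : ℝ => u ^ q * exp (c * u - u ^ 2 / 2)) ∩ Ioi 0 = Ioi 0 :=
    inter_eq_right.2 fun u (hu : 0 < u) => by simp only [Function.mem_support]; positivity
  rw [hsupp]
  simp

theorem hasDerivAt_parabolicCylinderIntegral {q : ℝ} (hq : -1 < q) (c : ℝ) :
    HasDerivAt (parabolicCylinderIntegral q) (parabolicCylinderIntegral (q + 1) c) c := by
  have hq' : -1 < q + 1 := by linarith
  refine (hasDerivAt_integral_of_dominated_loc_of_deriv_le
    (F := fun c u => u ^ q * exp (c * u - u ^ 2 / 2))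
    (F' := fun c u => u ^ (q + 1) * exp (c * u - u ^ 2 / 2)) (Metric.ball_mem_nhds c one_pos)
    (Eventually.of_forall fun c' => (integrableOn_rpow_mul_exp_mul_sub_sq hq c').1)
    (integrableOn_rpow_mul_exp_mul_sub_sq hq c) (integrableOn_rpow_mul_exp_mul_sub_sq hq' c).1
    (bound := fun u => u ^ (q + 1) * exp ((|c| + 1) * u - u ^ 2 / 2)) ?_
    (integrableOn_rpow_mul_exp_mul_sub_sq hq' (|c| + 1)) ?_).2
  · filter_upwards [ae_restrict_mem measurableSet_Ioi] with u (hu : 0 < u) c' hc'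
    have hc'le : c' ≤ |c| + 1 := by
      rw [Metric.mem_ball, dist_eq] at hc'
      linarith [le_abs_self c, (abs_lt.1 hc').2]
    rw [norm_of_nonneg (by positivity)]
    gcongr
  · filter_upwards [ae_restrict_mem measurableSet_Ioi] with u (hu : 0 < u) c' _
    have hexp : HasDerivAt (fun c' => exp (c' * u - u ^ 2 / 2)) (exp (c' * u - u ^ 2 / 2) * u) c' :=
      ((hasDerivAt_mul_const u).sub_const _).exp
    refine (hexp.const_mul (u ^ q)).congr_deriv ?_
    rw [rpow_add_one hu.ne']
    ring

theorem tendsto_rpow_mul_exp_mul_sub_sq_atTop (q c : ℝ) :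
    Tendsto (fun u : ℝ => u ^ q * exp (c * u - u ^ 2 / 2)) atTop (𝓝 0) := by
  refine tendsto_of_tendsto_of_tendsto_of_le_of_le' tendsto_const_nhds
    (tendsto_rpow_mul_exp_neg_mul_atTop_nhds_zero q 1 one_pos) ?_ ?_
  · filter_upwards [eventually_gt_atTop 0] with u hu
    positivity
  · filter_upwards [eventually_ge_atTop (2 * (c + 1)), eventually_gt_atTop 0] with u hu hu0
    gcongr
    nlinarith

theorem parabolicCylinderIntegral_add_one {q : ℝ} (hq : 0 < q) (c : ℝ) :
    parabolicCylinderIntegral (q + 1) c =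
      q * parabolicCylinderIntegral (q - 1) c + c * parabolicCylinderIntegral q c := by
  have h₁ := (integrableOn_rpow_mul_exp_mul_sub_sq (by linarith : -1 < q - 1) c).const_mul q
  have h₂ := (integrableOn_rpow_mul_exp_mul_sub_sq (by linarith : -1 < q) c).const_mul c
  have h₃ := integrableOn_rpow_mul_exp_mul_sub_sq (by linarith : -1 < q + 1) c
  have h₁₂ : IntegrableOn (fun u : ℝ => q * (u ^ (q - 1) * exp (c * u - u ^ 2 / 2)) +
      c * (u ^ q * exp (c * u - u ^ 2 / 2))) (Ioi 0) := h₁.add h₂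
  have hderiv : ∀ u ∈ Ioi (0 : ℝ), HasDerivAt (fun u => u ^ q * exp (c * u - u ^ 2 / 2))
      (q * (u ^ (q - 1) * exp (c * u - u ^ 2 / 2)) + c * (u ^ q * exp (c * u - u ^ 2 / 2)) -
        u ^ (q + 1) * exp (c * u - u ^ 2 / 2)) u := by
    intro u (hu : 0 < u)
    have hexponent : HasDerivAt (fun u : ℝ => c * u - u ^ 2 / 2) (c - u) u :=
      (((hasDerivAt_id' u).const_mul c).sub ((hasDerivAt_pow 2 u).div_const 2)).congr_deriv
        (by push_cast; ring)
    refine ((hasDerivAt_rpow_const (Or.inl hu.ne')).mul hexponent.exp).congr_deriv ?_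
    rw [rpow_add_one hu.ne']
    ring
  have hcont : ContinuousWithinAt (fun u : ℝ => u ^ q * exp (c * u - u ^ 2 / 2)) (Ici 0) 0 :=
    ((continuousAt_id.rpow_const (Or.inr hq.le)).mul (by fun_prop)).continuousWithinAt
  have hftc := integral_Ioi_of_hasDerivAt_of_tendsto hcont hderiv (h₁₂.sub h₃)
    (tendsto_rpow_mul_exp_mul_sub_sq_atTop q c)
  rw [integral_sub h₁₂ h₃, integral_add h₁ h₂, integral_const_mul, integral_const_mul,
    zero_rpow hq.ne', zero_mul, sub_zero] at hftc
  unfold parabolicCylinderIntegral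
  linarith

noncomputable def wronskian (f g : ℝ → ℝ) (x : ℝ) : ℝ := deriv f x * g x - f x * deriv g x

structure SolvesLinearODE (β γ f : ℝ → ℝ) : Prop where
  differentiable : Differentiable ℝ f
  differentiable_deriv : Differentiable ℝ (deriv f)
  deriv_deriv : ∀ x, deriv (deriv f) x = β x * deriv f x + γ x * f x

theorem hasDerivAt_div_of_wronskian {f g : ℝ → ℝ} {x : ℝ} (hf : DifferentiableAt ℝ f x)
    (hg : DifferentiableAt ℝ g x) (hgx : g x ≠ 0) :
    HasDerivAt (fun y => f y / g y) (wronskian f g x / g x ^ 2) x :=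
  hf.hasDerivAt.div hg.hasDerivAt hgx

theorem hasDerivAt_wronskian_s12 {f g : ℝ → ℝ} {x : ℝ} (hf : DifferentiableAt ℝ f x)
    (hf' : DifferentiableAt ℝ (deriv f) x) (hg : DifferentiableAt ℝ g x)
    (hg' : DifferentiableAt ℝ (deriv g) x) :
    HasDerivAt (wronskian f g) (deriv (deriv f) x * g x - f x * deriv (deriv g) x) x :=
  ((hf'.hasDerivAt.mul hg.hasDerivAt).sub (hf.hasDerivAt.mul hg'.hasDerivAt)).congr_deriv
    (by ring)

structure IsFundamentalPair (β γ F G : ℝ → ℝ) : Prop where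
  solves_left : SolvesLinearODE β γ F
  solves_right : SolvesLinearODE β γ G
  left_pos : ∀ x, 0 < F x
  right_pos : ∀ x, 0 < G x
  wronskian_pos : ∀ x, 0 < wronskian F G x

namespace IsFundamentalPair

variable {β γ F G h H ψinv : ℝ → ℝ}

theorem hasDerivAt_div (hFG : IsFundamentalPair β γ F G) (x : ℝ) :
    HasDerivAt (fun y => F y / G y) (wronskian F G x / G x ^ 2) x :=
  hasDerivAt_div_of_wronskian (hFG.solves_left.differentiable x)
    (hFG.solves_right.differentiable x) (hFG.right_pos x).ne'

theorem strictMono_div (hFG : IsFundamentalPair β γ F G) : StrictMono fun x => F x / G x :=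
  strictMono_of_hasDerivAt_pos hFG.hasDerivAt_div fun x =>
    div_pos (hFG.wronskian_pos x) (pow_pos (hFG.right_pos x) 2)

theorem continuousAt_rightInverse (hFG : IsFundamentalPair β γ F G)
    (hinv : ∀ z, 0 < z → F (ψinv z) / G (ψinv z) = z) {z : ℝ} (hz : 0 < z) :
    ContinuousAt ψinv z := by
  have hmono : MonotoneOn ψinv (Ioi 0) := fun a ha b hb hab => by
    rw [← hFG.strictMono_div.le_iff_le, hinv a ha, hinv b hb]
    exact hab
  have himage : ψinv '' Ioi 0 = univ := by
    refine eq_univ_of_forall fun x => ?_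
    have hx : 0 < F x / G x := div_pos (hFG.left_pos x) (hFG.right_pos x)
    exact ⟨F x / G x, hx, hFG.strictMono_div.injective (hinv _ hx)⟩
  refine continuousAt_of_monotoneOn_of_image_mem_nhds hmono (Ioi_mem_nhds hz) ?_
  rw [himage]
  exact univ_mem

theorem hasDerivAt_comp_rightInverse (hFG : IsFundamentalPair β γ F G)
    (hinv : ∀ z, 0 < z → F (ψinv z) / G (ψinv z) = z) {K : ℝ → ℝ} {k z : ℝ} (hz : 0 < z)
    (hK : HasDerivAt K k (ψinv z)) :
    HasDerivAt (fun y => K (ψinv y)) (k * (G (ψinv z) ^ 2 / wronskian F G (ψinv z))) z := by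
  have hψinv := HasDerivAt.of_local_left_inverse (hFG.continuousAt_rightInverse hinv hz)
    (hFG.hasDerivAt_div (ψinv z))
    (div_pos (hFG.wronskian_pos _) (pow_pos (hFG.right_pos _) 2)).ne'
    (eventually_of_mem (Ioi_mem_nhds hz) hinv)
  rw [inv_div] at hψinv
  exact hK.comp z hψinv

theorem hasDerivAt_transform (hFG : IsFundamentalPair β γ F G)
    (hinv : ∀ z, 0 < z → F (ψinv z) / G (ψinv z) = z) (hh : Differentiable ℝ h)
    (hH : ∀ z, 0 < z → H z = h (ψinv z) / G (ψinv z)) {z : ℝ} (hz : 0 < z) :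
    HasDerivAt H (wronskian h G (ψinv z) / wronskian F G (ψinv z)) z := by
  have hGx := (hFG.right_pos (ψinv z)).ne'
  have hWx := (hFG.wronskian_pos (ψinv z)).ne'
  refine ((hFG.hasDerivAt_comp_rightInverse hinv hz (hasDerivAt_div_of_wronskian (hh _)
    (hFG.solves_right.differentiable _) hGx)).congr_of_eventuallyEq
      (eventually_of_mem (Ioi_mem_nhds hz) hH)).congr_deriv ?_
  field_simp

theorem hasDerivAt_deriv_transform (hFG : IsFundamentalPair β γ F G)
    (hinv : ∀ z, 0 < z → F (ψinv z) / G (ψinv z) = z) (hh : Differentiable ℝ h)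
    (hh' : Differentiable ℝ (deriv h)) (hH : ∀ z, 0 < z → H z = h (ψinv z) / G (ψinv z))
    {z : ℝ} (hz : 0 < z) :
    HasDerivAt (deriv H) (G (ψinv z) ^ 3 *
      (deriv (deriv h) (ψinv z) - β (ψinv z) * deriv h (ψinv z) - γ (ψinv z) * h (ψinv z)) /
        wronskian F G (ψinv z) ^ 2) z := by
  have hF := hFG.solves_left
  have hG := hFG.solves_right
  have hquot := (hasDerivAt_wronskian_s12 (hh _) (hh' _) (hG.differentiable _)
    (hG.differentiable_deriv _)).div (hasDerivAt_wronskian_s12 (hF.differentiable _)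
      (hF.differentiable_deriv _) (hG.differentiable _) (hG.differentiable_deriv _))
    (hFG.wronskian_pos (ψinv z)).ne'
  have hderivH : deriv H =ᶠ[𝓝 z] fun y => wronskian h G (ψinv y) / wronskian F G (ψinv y) :=
    eventually_of_mem (Ioi_mem_nhds hz) fun y hy => (hFG.hasDerivAt_transform hinv hh hH hy).deriv
  refine ((hFG.hasDerivAt_comp_rightInverse hinv hz hquot).congr_of_eventuallyEq
    hderivH).congr_deriv ?_
  generalize ψinv z = x
  have hWx := (hFG.wronskian_pos x).ne'
  have habel : deriv (deriv F) x * G x - F x * deriv (deriv G) x = β x * wronskian F G x := by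
    rw [hF.deriv_deriv, hG.deriv_deriv, wronskian]
    ring
  have hnum : deriv (deriv h) x * G x - h x * deriv (deriv G) x = β x * wronskian h G x +
      G x * (deriv (deriv h) x - β x * deriv h x - γ x * h x) := by
    rw [hG.deriv_deriv, wronskian]
    ring
  rw [habel, hnum]
  field_simp
  ring

theorem convexOn_transform (hFG : IsFundamentalPair β γ F G)
    (hinv : ∀ z, 0 < z → F (ψinv z) / G (ψinv z) = z) (hh : Differentiable ℝ h)
    (hh' : Differentiable ℝ (deriv h)) (hH : ∀ z, 0 < z → H z = h (ψinv z) / G (ψinv z))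
    (b : ℝ) (hL : ∀ x ≤ b, 0 ≤ deriv (deriv h) x - β x * deriv h x - γ x * h x) :
    ConvexOn ℝ (Ioc 0 (F b / G b)) H := by
  have hH' z (hz : 0 < z) := hFG.hasDerivAt_transform hinv hh hH hz
  have hH'' z (hz : 0 < z) := hFG.hasDerivAt_deriv_transform hinv hh hh' hH hz
  refine convexOn_of_deriv2_nonneg (convex_Ioc _ _)
    (fun z hz => (hH' z hz.1).continuousAt.continuousWithinAt) ?_ ?_ ?_ <;> rw [interior_Ioc]
  · exact fun z hz => (hH' z hz.1).differentiableAt.differentiableWithinAt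
  · exact fun z hz => (hH'' z hz.1).differentiableAt.differentiableWithinAt
  · intro z hz
    have hx : ψinv z ≤ b := hFG.strictMono_div.le_iff_le.1 <| by
      show F (ψinv z) / G (ψinv z) ≤ F b / G b
      rw [hinv z hz.1]
      exact hz.2.le
    rw [Function.iterate_succ_apply', Function.iterate_one, (hH'' z hz.1).deriv]
    exact div_nonneg (mul_nonneg (pow_pos (hFG.right_pos _) 3).le (hL _ hx)) (sq_nonneg _)

theorem concaveOn_transform (hFG : IsFundamentalPair β γ F G)
    (hinv : ∀ z, 0 < z → F (ψinv z) / G (ψinv z) = z) (hh : Differentiable ℝ h)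
    (hh' : Differentiable ℝ (deriv h)) (hH : ∀ z, 0 < z → H z = h (ψinv z) / G (ψinv z))
    (b : ℝ) (hL : ∀ x, b ≤ x → deriv (deriv h) x - β x * deriv h x - γ x * h x ≤ 0) :
    ConcaveOn ℝ (Ici (F b / G b)) H := by
  have hb : 0 < F b / G b := div_pos (hFG.left_pos b) (hFG.right_pos b)
  have hH' z (hz : F b / G b ≤ z) := hFG.hasDerivAt_transform hinv hh hH (hb.trans_le hz)
  have hH'' z (hz : F b / G b ≤ z) :=
    hFG.hasDerivAt_deriv_transform hinv hh hh' hH (hb.trans_le hz)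
  refine concaveOn_of_deriv2_nonpos (convex_Ici _)
    (fun z hz => (hH' z hz).continuousAt.continuousWithinAt) ?_ ?_ ?_ <;> rw [interior_Ici]
  · exact fun z hz => (hH' z hz.le).differentiableAt.differentiableWithinAt
  · exact fun z hz => (hH'' z hz.le).differentiableAt.differentiableWithinAt
  · intro z hz
    have hx : b ≤ ψinv z := hFG.strictMono_div.le_iff_le.1 <| by
      show F b / G b ≤ F (ψinv z) / G (ψinv z)
      rw [hinv z (hb.trans hz)]
      exact hz.le
    rw [Function.iterate_succ_apply', Function.iterate_one, (hH'' z hz.le).deriv]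
    exact div_nonpos_of_nonpos_of_nonneg
      (mul_nonpos_of_nonneg_of_nonpos (pow_pos (hFG.right_pos _) 3).le (hL _ hx)) (sq_nonneg _)

end IsFundamentalPair

theorem hasDerivAt_parabolicCylinderIntegral_comp {q : ℝ} (hq : -1 < q) (a θ x : ℝ) :
    HasDerivAt (fun y => parabolicCylinderIntegral q (a * (y - θ)))
      (a * parabolicCylinderIntegral (q + 1) (a * (x - θ))) x :=
  ((hasDerivAt_parabolicCylinderIntegral hq _).comp x
    (((hasDerivAt_id x).sub_const θ).const_mul a)).congr_deriv (by simp only [id]; ring)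

theorem deriv_parabolicCylinderIntegral_comp {q : ℝ} (hq : -1 < q) (a θ : ℝ) :
    deriv (fun y => parabolicCylinderIntegral q (a * (y - θ))) =
      fun x => a * parabolicCylinderIntegral (q + 1) (a * (x - θ)) :=
  funext fun x => (hasDerivAt_parabolicCylinderIntegral_comp hq a θ x).deriv

theorem solvesLinearODE_parabolicCylinderIntegral {p : ℝ} (hp : 0 < p) (a θ : ℝ) :
    SolvesLinearODE (fun x => a ^ 2 * (x - θ)) (fun _ => a ^ 2 * p)
      (fun x => parabolicCylinderIntegral (p - 1) (a * (x - θ))) := by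
  have hderiv := deriv_parabolicCylinderIntegral_comp (by linarith : -1 < p - 1) a θ
  rw [sub_add_cancel] at hderiv
  have hderiv2 x : HasDerivAt (deriv fun x => parabolicCylinderIntegral (p - 1) (a * (x - θ)))
      (a * (a * parabolicCylinderIntegral (p + 1) (a * (x - θ)))) x := by
    rw [hderiv]
    exact (hasDerivAt_parabolicCylinderIntegral_comp (by linarith) a θ x).const_mul a
  refine ⟨fun x => ?_, fun x => (hderiv2 x).differentiableAt, fun x => ?_⟩
  · exact (hasDerivAt_parabolicCylinderIntegral_comp (by linarith) a θ x).differentiableAt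
  rw [(hderiv2 x).deriv, hderiv, parabolicCylinderIntegral_add_one hp]
  ring

theorem isFundamentalPair_parabolicCylinderIntegral {p a : ℝ} (hp : 0 < p) (ha : 0 < a)
    (θ : ℝ) :
    IsFundamentalPair (fun x => a ^ 2 * (x - θ)) (fun _ => a ^ 2 * p)
      (fun x => parabolicCylinderIntegral (p - 1) (a * (x - θ)))
      (fun x => parabolicCylinderIntegral (p - 1) (-a * (x - θ))) where
  solves_left := solvesLinearODE_parabolicCylinderIntegral hp a θ
  solves_right := by simpa only [neg_sq] using solvesLinearODE_parabolicCylinderIntegral hp (-a) θ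
  left_pos _ := parabolicCylinderIntegral_pos (by linarith) _
  right_pos _ := parabolicCylinderIntegral_pos (by linarith) _
  wronskian_pos x := by
    have hq : -1 < p - 1 := by linarith
    rw [wronskian, deriv_parabolicCylinderIntegral_comp hq, deriv_parabolicCylinderIntegral_comp hq,
      sub_add_cancel]
    have h₁ := parabolicCylinderIntegral_pos hq (a * (x - θ))
    have h₂ := parabolicCylinderIntegral_pos hq (-a * (x - θ))
    have h₃ := parabolicCylinderIntegral_pos (by linarith : -1 < p) (a * (x - θ))
    have h₄ := parabolicCylinderIntegral_pos (by linarith : -1 < p) (-a * (x - θ))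
    linarith [mul_pos ha (mul_pos h₃ h₂), mul_pos ha (mul_pos h₁ h₄)]

theorem stmt12_general
    (μ σ θ r c_s : ℝ)
    (hμ : 0 < μ) (hσ : 0 < σ) (hr : 0 < r) (hcs : 0 < c_s)
    (F G : ℝ → ℝ)
    (hF : ∀ x : ℝ, F x = ∫ u in Ioi (0:ℝ),
        u ^ (r / μ - 1) * Real.exp (Real.sqrt (2 * μ / σ ^ 2) * (x - θ) * u - u ^ 2 / 2))
    (hG : ∀ x : ℝ, G x = ∫ u in Ioi (0:ℝ),
        u ^ (r / μ - 1) * Real.exp (Real.sqrt (2 * μ / σ ^ 2) * (θ - x) * u - u ^ 2 / 2))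
    (ψ : ℝ → ℝ) (hψ : ∀ x, ψ x = F x / G x)
    (ψinv : ℝ → ℝ)
    (hinv_right : ∀ z : ℝ, 0 < z → ψ (ψinv z) = z)
    (H : ℝ → ℝ)
    (hH : ∀ z : ℝ, 0 < z → H z = (Real.exp (ψinv z) - c_s) / G (ψinv z))
    (f_s : ℝ → ℝ)
    (hfs : ∀ x : ℝ, f_s x = (μ * θ + σ ^ 2 / 2 - r) - μ * x + r * c_s * Real.exp (-x))
    (x_s : ℝ) (hxs : f_s x_s = 0) :
    ConvexOn ℝ (Ioc (0:ℝ) (ψ x_s)) H ∧ ConcaveOn ℝ (Ici (ψ x_s)) H := by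
  set α := √(2 * μ / σ ^ 2)
  obtain rfl : ψ = fun x => F x / G x := funext hψ
  obtain rfl : F = fun x => parabolicCylinderIntegral (r / μ - 1) (α * (x - θ)) := funext hF
  obtain rfl : G = fun x => parabolicCylinderIntegral (r / μ - 1) (-α * (x - θ)) :=
    funext fun x => by rw [hG, show -α * (x - θ) = α * (θ - x) by ring]; rfl
  have hFG := isFundamentalPair_parabolicCylinderIntegral (div_pos hr hμ)
    (sqrt_pos.2 (by positivity) : 0 < α) θ
  have hα2 : α ^ 2 = 2 * μ / σ ^ 2 := sq_sqrt (by positivity)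
  have hh : Differentiable ℝ fun x => exp x - c_s := by fun_prop
  have hderiv : deriv (fun x => exp x - c_s) = exp := by
    ext x
    simp
  have hh' : Differentiable ℝ (deriv fun x => exp x - c_s) := by
    rw [hderiv]
    exact differentiable_exp
  have hgenerator x : deriv (deriv fun x => exp x - c_s) x
      - α ^ 2 * (x - θ) * deriv (fun x => exp x - c_s) x - α ^ 2 * (r / μ) * (exp x - c_s)
      = 2 / σ ^ 2 * exp x * f_s x := by
    rw [hderiv, Real.deriv_exp, hfs, hα2, exp_neg]
    field_simp
    ring
  have hfs_anti : StrictAnti f_s := fun x y hxy => by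
    rw [hfs, hfs]
    nlinarith [mul_lt_mul_of_pos_left (exp_lt_exp.2 (neg_lt_neg hxy)) (mul_pos hr hcs)]
  refine ⟨hFG.convexOn_transform hinv_right hh hh' hH x_s fun x hx => ?_,
    hFG.concaveOn_transform hinv_right hh hh' hH x_s fun x hx => ?_⟩
  · rw [hgenerator]
    exact mul_nonneg (by positivity) (hxs ▸ hfs_anti.antitone hx)
  · rw [hgenerator]
    exact mul_nonpos_of_nonneg_of_nonpos (by positivity) (hxs ▸ hfs_anti.antitone hx)

/-- H is convex on (0, ψ(x_s)] and concave on [ψ(x_s), +∞). -/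
theorem stmt12
    (μ σ θ r c_s c_b : ℝ)
    (hμ : 0 < μ) (hσ : 0 < σ) (hr : 0 < r) (hcs : 0 < c_s) (hcb : 0 < c_b)
    (F G : ℝ → ℝ)
    (hF : ∀ x : ℝ, F x = ∫ u in Ioi (0:ℝ),
        u ^ (r / μ - 1) * Real.exp (Real.sqrt (2 * μ / σ ^ 2) * (x - θ) * u - u ^ 2 / 2))
    (hG : ∀ x : ℝ, G x = ∫ u in Ioi (0:ℝ),
        u ^ (r / μ - 1) * Real.exp (Real.sqrt (2 * μ / σ ^ 2) * (θ - x) * u - u ^ 2 / 2))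
    (ψ : ℝ → ℝ) (hψ : ∀ x, ψ x = F x / G x)
    (ψinv : ℝ → ℝ)
    (hinv_left : ∀ x : ℝ, ψinv (ψ x) = x)
    (hinv_right : ∀ z : ℝ, 0 < z → ψ (ψinv z) = z)
    (H : ℝ → ℝ)
    (hH : ∀ z : ℝ, 0 < z → H z = (Real.exp (ψinv z) - c_s) / G (ψinv z))
    (hH0 : H 0 = 0)
    (f_s : ℝ → ℝ)
    (hfs : ∀ x : ℝ, f_s x = (μ * θ + σ ^ 2 / 2 - r) - μ * x + r * c_s * Real.exp (-x))
    (x_s : ℝ) (hxs : f_s x_s = 0) (hxs_uniq : ∀ y, f_s y = 0 → y = x_s) :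
    ConvexOn ℝ (Ioc (0:ℝ) (ψ x_s)) H ∧ ConcaveOn ℝ (Ici (ψ x_s)) H :=
  stmt12_general μ σ θ r c_s hμ hσ hr hcs F G hF hG ψ hψ ψinv hinv_right H hH f_s hfs x_s hxs
end

section
/- The function Ĥ is continuous on [0, +∞), differentiable on (0, +∞), and twice differentiable on (0, ψ(b*)) ∪ (ψ(b*), +∞); Ĥ(0) = 0; Ĥ is strictly decreasing on [ψ(b*), +∞); and if sup_{x∈ℝ} ĥ(x) > 0, then there exists b̲ < b* such that Ĥ(z) < 0 for all z ∈ (0, ψ(b̲)) ∪ [ψ(b*), +∞). -/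
/-!
Write `J s y = ∫₀^∞ u^s e^{yu - u²/2} du` (`gaussMoment`), so that `F x = J s (k (x - θ))` and
`G x = J s (k (θ - x))` with `s = r/μ - 1 > -1` and `k = √(2μ/σ²) > 0`. Differentiating under
the integral sign gives `∂_y J s = J (s + 1)`, so `J s` is smooth, positive and increasing, with
limits `0` at `-∞` and `∞` at `+∞`. Hence `F` increases, `G` decreases, and `ψ = F / G` is a
smooth bijection of `ℝ` onto `(0, ∞)` with positive derivative, whose inverse is smooth.

The equation defining `b*` is the smooth-fit condition: it makes the two pieces of `ĥ` have the
same derivative at `b*`, so `ĥ` is differentiable everywhere and smooth off `b*`. Therefore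
`Ĥ = (ĥ / G) ∘ ψ⁻¹` is differentiable on `(0, ∞)` and twice differentiable off `ψ(b*)`. On
`[b*, ∞)` we have `ĥ = -(c_s + c_b)`, so there `Ĥ = -(c_s + c_b) / G ∘ ψ⁻¹` is negative and
strictly decreasing. Finally `ĥ → -c_b < 0` and `G → ∞` at `-∞`, which gives `Ĥ(0+) = 0` and
`Ĥ < 0` near `0`.
-/

open Real MeasureTheory Set Filter

open scoped ContDiff

noncomputable def gaussMoment (s y : ℝ) : ℝ :=
  ∫ u in Ioi 0, u ^ s * exp (y * u - u ^ 2 / 2)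

section GaussMoment

variable {s : ℝ}

lemma measurable_gaussMoment_integrand (s y : ℝ) :
    Measurable fun u : ℝ => u ^ s * exp (y * u - u ^ 2 / 2) := by
  fun_prop

lemma integrableOn_gaussMoment_integrand (hs : -1 < s) (y : ℝ) :
    IntegrableOn (fun u : ℝ => u ^ s * exp (y * u - u ^ 2 / 2)) (Ioi 0) := by
  refine ((integrableOn_rpow_mul_exp_neg_mul_sq (b := 1 / 4) (by norm_num) hs).const_mul
    (exp (y ^ 2))).mono' (measurable_gaussMoment_integrand s y).aestronglyMeasurable ?_
  filter_upwards [ae_restrict_mem measurableSet_Ioi] with u (hu : 0 < u)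
  rw [norm_of_nonneg (by positivity), mul_left_comm, ← exp_add]
  gcongr
  -- `y u - u² / 2 ≤ y² - u² / 4`
  nlinarith [sq_nonneg (y - u / 2)]

lemma setIntegral_gaussMoment_integrand_pos (hs : -1 < s) (y : ℝ) {S : Set ℝ}
    (hS : MeasurableSet S) (hS0 : S ⊆ Ioi 0) (hSvol : 0 < volume S) :
    0 < ∫ u in S, u ^ s * exp (y * u - u ^ 2 / 2) := by
  have hpos : ∀ u ∈ S, 0 < u ^ s * exp (y * u - u ^ 2 / 2) := fun u hu =>
    have : 0 < u := hS0 hu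
    by positivity
  rw [setIntegral_pos_iff_support_of_nonneg_ae
    (ae_restrict_of_forall_mem hS fun u hu => (hpos u hu).le)
    ((integrableOn_gaussMoment_integrand hs y).mono_set hS0),
    inter_eq_right.mpr fun u hu => Function.mem_support.mpr (hpos u hu).ne']
  exact hSvol

lemma gaussMoment_pos (hs : -1 < s) (y : ℝ) : 0 < gaussMoment s y :=
  setIntegral_gaussMoment_integrand_pos hs y measurableSet_Ioi subset_rfl (by simp)

theorem hasDerivAt_gaussMoment (hs : -1 < s) (y : ℝ) :
    HasDerivAt (gaussMoment s) (gaussMoment (s + 1) y) y := by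
  refine (hasDerivAt_integral_of_dominated_loc_of_deriv_le
    (F' := fun y u => u ^ (s + 1) * exp (y * u - u ^ 2 / 2))
    (bound := fun u => u ^ (s + 1) * exp ((|y| + 1) * u - u ^ 2 / 2))
    (Metric.ball_mem_nhds y one_pos)
    (Eventually.of_forall fun y' => (measurable_gaussMoment_integrand s y').aestronglyMeasurable)
    (integrableOn_gaussMoment_integrand hs y)
    (measurable_gaussMoment_integrand (s + 1) y).aestronglyMeasurable ?_
    (integrableOn_gaussMoment_integrand (by linarith) _) ?_).2
  · filter_upwards [ae_restrict_mem measurableSet_Ioi] with u (hu : 0 < u) y' hy'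
    rw [norm_of_nonneg (by positivity)]
    have : y' ≤ |y| + 1 := by
      linarith [le_abs_self y, (abs_lt.mp (Real.dist_eq y' y ▸ Metric.mem_ball.mp hy')).2]
    gcongr
  · filter_upwards [ae_restrict_mem measurableSet_Ioi] with u (hu : 0 < u) y' _
    refine ((((hasDerivAt_id' y').mul_const u).sub_const (u ^ 2 / 2)).exp.const_mul
      (u ^ s)).congr_deriv ?_
    rw [rpow_add hu, rpow_one]
    ring

lemma differentiable_gaussMoment (hs : -1 < s) : Differentiable ℝ (gaussMoment s) :=
  fun y => (hasDerivAt_gaussMoment hs y).differentiableAt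

theorem contDiff_gaussMoment (hs : -1 < s) : ContDiff ℝ ∞ (gaussMoment s) := by
  suffices h : ∀ n : ℕ, ∀ s : ℝ, -1 < s → ContDiff ℝ n (gaussMoment s) by
    exact contDiff_infty.2 fun n => h n s hs
  intro n
  induction n with
  | zero => exact fun s hs => contDiff_zero.2 (differentiable_gaussMoment hs).continuous
  | succ n ih =>
    intro s hs
    rw [Nat.cast_succ, contDiff_succ_iff_deriv]
    refine ⟨differentiable_gaussMoment hs, by simp, ?_⟩
    rw [show deriv (gaussMoment s) = gaussMoment (s + 1) from
      funext fun y => (hasDerivAt_gaussMoment hs y).deriv]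
    exact ih _ (by linarith)

theorem tendsto_gaussMoment_atBot (hs : -1 < s) :
    Tendsto (gaussMoment s) atBot (nhds 0) := by
  have := tendsto_integral_filter_of_dominated_convergence (μ := volume.restrict (Ioi 0))
    (F := fun y u => u ^ s * exp (y * u - u ^ 2 / 2)) (l := atBot) (f := fun _ => (0 : ℝ))
    (fun u => u ^ s * exp (0 * u - u ^ 2 / 2))
    (Eventually.of_forall fun y => (measurable_gaussMoment_integrand s y).aestronglyMeasurable)
    ?_ (integrableOn_gaussMoment_integrand hs 0) ?_
  · rw [integral_zero] at this
    exact this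
  · filter_upwards [eventually_le_atBot 0] with y hy
    filter_upwards [ae_restrict_mem measurableSet_Ioi] with u (hu : 0 < u)
    rw [norm_of_nonneg (by positivity)]
    gcongr
  · filter_upwards [ae_restrict_mem measurableSet_Ioi] with u (hu : 0 < u)
    simpa [sub_eq_add_neg] using (tendsto_exp_atBot.comp
      (tendsto_atBot_add_const_right _ (-(u ^ 2 / 2)) (tendsto_id.atBot_mul_const hu))).const_mul
        (u ^ s)

theorem tendsto_gaussMoment_atTop (hs : -1 < s) :
    Tendsto (gaussMoment s) atTop atTop := by
  set c := ∫ u in Ioi 1, u ^ s * exp (0 * u - u ^ 2 / 2)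
  have hsub : Ioi (1 : ℝ) ⊆ Ioi 0 := Ioi_subset_Ioi zero_le_one
  have hc : 0 < c := setIntegral_gaussMoment_integrand_pos hs 0 measurableSet_Ioi hsub (by simp)
  refine tendsto_atTop_mono' _ ?_ ((tendsto_exp_atTop).atTop_mul_const hc)
  filter_upwards [eventually_ge_atTop 0] with y hy
  calc exp y * c = ∫ u in Ioi 1, exp y * (u ^ s * exp (0 * u - u ^ 2 / 2)) :=
        (integral_const_mul _ _).symm
    _ ≤ ∫ u in Ioi 1, u ^ s * exp (y * u - u ^ 2 / 2) := by
        refine setIntegral_mono_on (((integrableOn_gaussMoment_integrand hs 0).mono_set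
          hsub).const_mul _) ((integrableOn_gaussMoment_integrand hs y).mono_set hsub)
          measurableSet_Ioi fun u (hu : 1 < u) => ?_
        rw [mul_left_comm, ← exp_add]
        have : 0 < u := by linarith
        gcongr
        nlinarith
    _ ≤ gaussMoment s y :=
        setIntegral_mono_set (integrableOn_gaussMoment_integrand hs y)
          (ae_restrict_of_forall_mem measurableSet_Ioi fun u (hu : 0 < u) => by positivity)
          hsub.eventuallyLE

end GaussMoment

theorem HasDerivAt.gaussMoment {s : ℝ} (hs : -1 < s) {f : ℝ → ℝ} {f' x : ℝ}
    (hf : HasDerivAt f f' x) :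
    HasDerivAt (fun x => _root_.gaussMoment s (f x)) (_root_.gaussMoment (s + 1) (f x) * f') x :=
  (hasDerivAt_gaussMoment hs (f x)).comp x hf

lemma hasDerivAt_of_eqOn_Iic_of_eqOn_Ici {f g₁ g₂ : ℝ → ℝ} {a f' : ℝ}
    (h₁ : HasDerivAt g₁ f' a) (h₂ : HasDerivAt g₂ f' a)
    (e₁ : EqOn f g₁ (Iic a)) (e₂ : EqOn f g₂ (Ici a)) : HasDerivAt f f' a := by
  have := (h₁.hasDerivWithinAt.congr e₁ (e₁ self_mem_Iic)).union
    (h₂.hasDerivWithinAt.congr e₂ (e₂ self_mem_Ici))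
  rwa [Iic_union_Ici, hasDerivWithinAt_univ] at this

lemma deriv_div_pos {F G : ℝ → ℝ} {x : ℝ} (hF : 0 < F x) (hG : 0 < G x)
    (hF' : 0 < deriv F x) (hG' : deriv G x < 0) : 0 < deriv (F / G) x := by
  rw [deriv_div (differentiableAt_of_deriv_ne_zero hF'.ne')
    (differentiableAt_of_deriv_ne_zero hG'.ne) hG.ne']
  exact div_pos (by nlinarith) (by positivity)

section Inverse

variable {f g : ℝ → ℝ} {t : Set ℝ}

lemma StrictMono.inverse_lt_iff (hf : StrictMono f) (hfg : ∀ z ∈ t, f (g z) = z) {z x : ℝ}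
    (hz : z ∈ t) : g z < x ↔ z < f x := by
  rw [← hf.lt_iff_lt, hfg z hz]

lemma StrictMono.le_inverse_iff (hf : StrictMono f) (hfg : ∀ z ∈ t, f (g z) = z) {z x : ℝ}
    (hz : z ∈ t) : x ≤ g z ↔ f x ≤ z := by
  rw [← hf.le_iff_le, hfg z hz]

lemma StrictMono.strictMonoOn_inverse (hf : StrictMono f) (hfg : ∀ z ∈ t, f (g z) = z) :
    StrictMonoOn g t := fun z hz w hw hzw =>
  (hf.inverse_lt_iff hfg hz).2 (by rwa [hfg w hw])

lemma StrictMono.inverse_comp_self (hf : StrictMono f) (hft : ∀ x, f x ∈ t)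
    (hfg : ∀ z ∈ t, f (g z) = z) (x : ℝ) : g (f x) = x :=
  hf.injective (hfg _ (hft x))

lemma StrictMono.continuousOn_inverse (hf : StrictMono f) (ht : IsOpen t) (hft : ∀ x, f x ∈ t)
    (hfg : ∀ z ∈ t, f (g z) = z) : ContinuousOn g t := fun _ hz =>
  ((hf.strictMonoOn_inverse hfg).continuousAt_of_image_mem_nhds (ht.mem_nhds hz)
    (Filter.mem_of_superset univ_mem fun x _ =>
      ⟨f x, hft x, hf.inverse_comp_self hft hfg x⟩)).continuousWithinAt

theorem StrictMono.contDiffAt_inverse {n : WithTop ℕ∞} (hf : StrictMono f) (hfc : Continuous f)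
    (ht : IsOpen t) (hft : ∀ x, f x ∈ t) (hfg : ∀ z ∈ t, f (g z) = z) {z : ℝ} (hz : z ∈ t)
    (hf' : deriv f (g z) ≠ 0) (hn : ContDiffAt ℝ n f (g z)) : ContDiffAt ℝ n g z :=
  let e : OpenPartialHomeomorph ℝ ℝ :=
    { toFun := f
      invFun := g
      source := univ
      target := t
      map_source' := fun x _ => hft x
      map_target' := fun _ _ => trivial
      left_inv' := fun x _ => hf.inverse_comp_self hft hfg x
      right_inv' := hfg
      open_source := isOpen_univ
      open_target := ht
      continuousOn_toFun := hfc.continuousOn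
      continuousOn_invFun := hf.continuousOn_inverse ht hft hfg }
  e.contDiffAt_symm_deriv hf' hz (differentiableAt_of_deriv_ne_zero hf').hasDerivAt hn

lemma StrictMono.tendsto_inverse_nhdsGT_zero (hf : StrictMono f) (hf0 : ∀ x, 0 < f x)
    (hfg : ∀ z ∈ Ioi 0, f (g z) = z) : Tendsto g (nhdsWithin 0 (Ioi 0)) atBot := by
  refine tendsto_atBot.2 fun x => ?_
  filter_upwards [Ioo_mem_nhdsGT (hf0 x)] with z hz
  exact ((hf.inverse_lt_iff hfg hz.1).2 hz.2).le

end Inverse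

lemma deriv_smoothFit_eq_zero {F : ℝ → ℝ} {b c d : ℝ} (hF : DifferentiableAt ℝ F b)
    (hFb : F b ≠ 0) (hb : exp b * F b = (exp b - c) * deriv F b) :
    deriv (fun x => (exp b - c) / F b * F x - exp x - d) b = 0 := by
  rw [deriv_sub_const, deriv_fun_sub (hF.const_mul _) differentiableAt_exp, deriv_const_mul _ hF,
    Real.deriv_exp, div_mul_eq_mul_div, ← hb, mul_div_cancel_right₀ _ hFb, sub_self]

section SmoothFit

variable {G g h : ℝ → ℝ} {b c : ℝ}

lemma differentiable_of_smoothFit (hg : Differentiable ℝ g) (hgb : deriv g b = 0)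
    (hlo : EqOn h g (Iic b)) (hhi : EqOn h (fun _ => c) (Ici b)) : Differentiable ℝ h := by
  intro x
  rcases lt_trichotomy x b with hx | rfl | hx
  · exact (hg x).congr_of_eventuallyEq
      (eventually_of_mem (Iio_mem_nhds hx) (hlo.mono Iio_subset_Iic_self))
  · exact (hasDerivAt_of_eqOn_Iic_of_eqOn_Ici (hgb ▸ (hg x).hasDerivAt)
      (hasDerivAt_const x c) hlo hhi).differentiableAt
  · exact (differentiableAt_const c).congr_of_eventuallyEq
      (eventually_of_mem (Ioi_mem_nhds hx) (hhi.mono Ioi_subset_Ici_self))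

lemma contDiffAt_of_eqOn_Iic_of_eqOn_Ici {n : WithTop ℕ∞} (hg : ContDiff ℝ n g)
    (hlo : EqOn h g (Iic b)) (hhi : EqOn h (fun _ => c) (Ici b)) {x : ℝ} (hx : x ≠ b) :
    ContDiffAt ℝ n h x := by
  rcases hx.lt_or_gt with hx | hx
  · exact hg.contDiffAt.congr_of_eventuallyEq
      (eventually_of_mem (Iio_mem_nhds hx) (hlo.mono Iio_subset_Iic_self))
  · exact contDiffAt_const.congr_of_eventuallyEq
      (eventually_of_mem (Ioi_mem_nhds hx) (hhi.mono Ioi_subset_Ici_self))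

lemma tendsto_atBot_of_eqOn_Iic {L : ℝ} (hg : Tendsto g atBot (nhds L))
    (hlo : EqOn h g (Iic b)) : Tendsto h atBot (nhds L) :=
  hg.congr' ((eventually_le_atBot b).mono fun _ hx => (hlo hx).symm)

lemma strictAntiOn_div_of_eqOn_Ici (hc : c < 0) (hG : StrictAnti G) (hG0 : ∀ x, 0 < G x)
    (hhi : EqOn h (fun _ => c) (Ici b)) : StrictAntiOn (h / G) (Ici b) := fun x hx y hy hxy => by
  simp only [Pi.div_apply, hhi hx, hhi hy]
  rw [div_lt_div_iff₀ (hG0 y) (hG0 x)]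
  nlinarith [hG hxy]

end SmoothFit

section Pullback

variable {Φ ψ T H : ℝ → ℝ}

lemma differentiableAt_of_forall_pos_eq_comp (hH : ∀ z, 0 < z → H z = Φ (T z)) {z : ℝ}
    (hz : 0 < z) (hΦ : DifferentiableAt ℝ Φ (T z)) (hT : DifferentiableAt ℝ T z) :
    DifferentiableAt ℝ H z :=
  (hΦ.comp z hT).congr_of_eventuallyEq (eventually_of_mem (Ioi_mem_nhds hz) hH)

lemma differentiableAt_deriv_of_forall_pos_eq_comp {n : WithTop ℕ∞}
    (hH : ∀ z, 0 < z → H z = Φ (T z)) {z : ℝ} (hz : 0 < z) (hΦ : ContDiffAt ℝ n Φ (T z))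
    (hT : ContDiffAt ℝ n T z) (hn : 2 ≤ n) : DifferentiableAt ℝ (deriv H) z :=
  ((hΦ.comp z hT).congr_of_eventuallyEq (eventually_of_mem (Ioi_mem_nhds hz) hH)).derivWithin
    (m := 1) hn |>.differentiableAt one_ne_zero

lemma continuousOn_Ici_zero_of_forall_pos (hH : ∀ z, 0 < z → H z = Φ (T z)) (hH0 : H 0 = 0)
    (hΦ : Tendsto Φ atBot (nhds 0)) (hT : Tendsto T (nhdsWithin 0 (Ioi 0)) atBot)
    (hcont : ∀ z, 0 < z → ContinuousAt H z) : ContinuousOn H (Ici 0) := by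
  intro z (hz : 0 ≤ z)
  rcases hz.eq_or_lt with rfl | hz
  · rw [← continuousWithinAt_Ioi_iff_Ici, ContinuousWithinAt, hH0]
    exact (hΦ.comp hT).congr' (eventually_nhdsWithin_of_forall fun z hz => (hH z hz).symm)
  · exact (hcont z hz).continuousWithinAt

lemma StrictAntiOn.comp_inverse {b : ℝ} (hΦ : StrictAntiOn Φ (Ici b)) (hψ : StrictMono ψ)
    (hψ0 : 0 < ψ b) (hψT : ∀ z ∈ Ioi 0, ψ (T z) = z) (hH : ∀ z, 0 < z → H z = Φ (T z)) :
    StrictAntiOn H (Ici (ψ b)) := by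
  intro z (hz : ψ b ≤ z) w (hw : ψ b ≤ w) hzw
  have hz0 := hψ0.trans_le hz
  have hw0 := hψ0.trans_le hw
  rw [hH z hz0, hH w hw0]
  exact hΦ ((hψ.le_inverse_iff hψT hz0).2 hz) ((hψ.le_inverse_iff hψT hw0).2 hw)
    (hψ.strictMonoOn_inverse hψT hz0 hw0 hzw)

lemma exists_forall_neg_of_comp_inverse {b : ℝ} (hψ : StrictMono ψ)
    (hψ0 : ∀ x, 0 < ψ x) (hψT : ∀ z ∈ Ioi 0, ψ (T z) = z) (hH : ∀ z, 0 < z → H z = Φ (T z))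
    (hΦbot : ∀ᶠ x in atBot, Φ x < 0) (hΦb : ∀ x, b ≤ x → Φ x < 0) :
    ∃ bb, bb < b ∧ ∀ z, ((0 < z ∧ z < ψ bb) ∨ ψ b ≤ z) → H z < 0 := by
  obtain ⟨M, hM⟩ := eventually_atBot.1 hΦbot
  refine ⟨min M (b - 1), (min_le_right _ _).trans_lt (by linarith), ?_⟩
  rintro z (⟨hz, hzM⟩ | hbz)
  · rw [hH z hz]
    exact hM _ (((hψ.inverse_lt_iff hψT hz).2 hzM).le.trans (min_le_left _ _))
  · have hz := (hψ0 b).trans_le hbz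
    rw [hH z hz]
    exact hΦb _ ((hψ.le_inverse_iff hψT hz).2 hbz)

end Pullback

structure IsIncDecPair (F G : ℝ → ℝ) : Prop where
  contDiff_left : ContDiff ℝ ∞ F
  contDiff_right : ContDiff ℝ ∞ G
  pos_left : ∀ x, 0 < F x
  pos_right : ∀ x, 0 < G x
  deriv_left_pos : ∀ x, 0 < deriv F x
  deriv_right_neg : ∀ x, deriv G x < 0
  tendsto_left_atBot : Tendsto F atBot (nhds 0)
  tendsto_right_atBot : Tendsto G atBot atTop

theorem isIncDecPair_gaussMoment {s k : ℝ} (θ : ℝ) (hs : -1 < s) (hk : 0 < k) :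
    IsIncDecPair (fun x => gaussMoment s (k * (x - θ))) (fun x => gaussMoment s (k * (θ - x))) where
  contDiff_left := (contDiff_gaussMoment hs).comp (by fun_prop)
  contDiff_right := (contDiff_gaussMoment hs).comp (by fun_prop)
  pos_left _ := gaussMoment_pos hs _
  pos_right _ := gaussMoment_pos hs _
  deriv_left_pos x := by
    have h : HasDerivAt (fun x => gaussMoment s (k * (x - θ)))
        (gaussMoment (s + 1) (k * (x - θ)) * (k * 1)) x :=
      (((hasDerivAt_id' x).sub_const θ).const_mul k).gaussMoment hs
    have := gaussMoment_pos (s := s + 1) (by linarith) (k * (x - θ))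
    rw [h.deriv]
    positivity
  deriv_right_neg x := by
    have h : HasDerivAt (fun x => gaussMoment s (k * (θ - x)))
        (gaussMoment (s + 1) (k * (θ - x)) * (k * -1)) x :=
      (((hasDerivAt_id' x).const_sub θ).const_mul k).gaussMoment hs
    have := gaussMoment_pos (s := s + 1) (by linarith) (k * (θ - x))
    rw [h.deriv]
    nlinarith
  tendsto_left_atBot := (tendsto_gaussMoment_atBot hs).comp <|
    (tendsto_atBot_add_const_right _ (-θ) tendsto_id).const_mul_atBot hk
  tendsto_right_atBot := (tendsto_gaussMoment_atTop hs).comp <|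
    (tendsto_atTop_add_const_left _ θ tendsto_neg_atBot_atTop).const_mul_atTop hk

namespace IsIncDecPair

variable {F G : ℝ → ℝ}

lemma pos_div (hP : IsIncDecPair F G) (x : ℝ) : 0 < (F / G) x :=
  div_pos (hP.pos_left x) (hP.pos_right x)

lemma deriv_div_pos (hP : IsIncDecPair F G) (x : ℝ) : 0 < deriv (F / G) x :=
  _root_.deriv_div_pos (hP.pos_left x) (hP.pos_right x) (hP.deriv_left_pos x)
    (hP.deriv_right_neg x)

lemma differentiable_left (hP : IsIncDecPair F G) : Differentiable ℝ F :=
  hP.contDiff_left.differentiable (by simp)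

lemma differentiable_right (hP : IsIncDecPair F G) : Differentiable ℝ G :=
  hP.contDiff_right.differentiable (by simp)

lemma strictMono_div (hP : IsIncDecPair F G) : StrictMono (F / G) :=
  strictMono_of_deriv_pos hP.deriv_div_pos

lemma strictAnti_right (hP : IsIncDecPair F G) : StrictAnti G :=
  strictAnti_of_deriv_neg hP.deriv_right_neg

lemma contDiffAt_inverse (hP : IsIncDecPair F G) {T : ℝ → ℝ}
    (hT : ∀ z ∈ Ioi 0, (F / G) (T z) = z) {z : ℝ} (hz : 0 < z) : ContDiffAt ℝ ∞ T z :=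
  have hC := hP.contDiff_left.div hP.contDiff_right fun x => (hP.pos_right x).ne'
  hP.strictMono_div.contDiffAt_inverse hC.continuous isOpen_Ioi hP.pos_div hT hz
    (hP.deriv_div_pos _).ne' hC.contDiffAt

end IsIncDecPair

theorem stmt14_general
    (μ σ θ r c_s c_b : ℝ)
    (hμ : 0 < μ) (hσ : 0 < σ) (hr : 0 < r) (hcs : 0 < c_s) (hcb : 0 < c_b)
    (F G : ℝ → ℝ)
    (hF : ∀ x : ℝ, F x = ∫ u in Ioi (0:ℝ),
        u ^ (r / μ - 1) * Real.exp (Real.sqrt (2 * μ / σ ^ 2) * (x - θ) * u - u ^ 2 / 2))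
    (hG : ∀ x : ℝ, G x = ∫ u in Ioi (0:ℝ),
        u ^ (r / μ - 1) * Real.exp (Real.sqrt (2 * μ / σ ^ 2) * (θ - x) * u - u ^ 2 / 2))
    (ψ : ℝ → ℝ) (hψ : ∀ x, ψ x = F x / G x)
    (ψinv : ℝ → ℝ)
    (hinv_right : ∀ z : ℝ, 0 < z → ψ (ψinv z) = z)
    (bstar : ℝ)
    (hb : Real.exp bstar * F bstar = (Real.exp bstar - c_s) * deriv F bstar)
    (V : ℝ → ℝ)
    (hV1 : ∀ x : ℝ, x < bstar → V x = (Real.exp bstar - c_s) / F bstar * F x)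
    (hV2 : ∀ x : ℝ, bstar ≤ x → V x = Real.exp x - c_s)
    (hhat : ℝ → ℝ)
    (hhat_def : ∀ x : ℝ, hhat x = V x - Real.exp x - c_b)
    (Hhat : ℝ → ℝ)
    (hHhat : ∀ z : ℝ, 0 < z → Hhat z = hhat (ψinv z) / G (ψinv z))
    (hHhat0 : Hhat 0 = 0) :
    ContinuousOn Hhat (Ici (0:ℝ)) ∧
    (∀ z : ℝ, 0 < z → DifferentiableAt ℝ Hhat z) ∧
    (∀ z : ℝ, 0 < z → z ≠ ψ bstar → DifferentiableAt ℝ (deriv Hhat) z) ∧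
    Hhat 0 = 0 ∧
    StrictAntiOn Hhat (Ici (ψ bstar)) ∧
    ((∃ x, 0 < hhat x) →
      ∃ bb : ℝ, bb < bstar ∧
        ∀ z : ℝ, ((0 < z ∧ z < ψ bb) ∨ ψ bstar ≤ z) → Hhat z < 0) := by
  have hP : IsIncDecPair F G := by
    rw [funext hF, funext hG]
    exact isIncDecPair_gaussMoment θ (by linarith [div_pos hr hμ]) (by positivity)
  obtain rfl : ψ = F / G := funext hψ
  have hG0 : ∀ x, G x ≠ 0 := fun x => (hP.pos_right x).ne'
  have hg : ContDiff ℝ ∞ fun x => (exp bstar - c_s) / F bstar * F x - exp x - c_b := by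
    have := hP.contDiff_left; fun_prop
  have hlo : EqOn hhat (fun x => (exp bstar - c_s) / F bstar * F x - exp x - c_b) (Iic bstar) :=
    fun x hx => by
      rcases (show x ≤ bstar from hx).lt_or_eq with hx | rfl
      · rw [hhat_def, hV1 x hx]
      · simp only [hhat_def, hV2 x le_rfl, div_mul_cancel₀ _ (hP.pos_left x).ne']
  have hhi : EqOn hhat (fun _ => -(c_s + c_b)) (Ici bstar) := fun x hx => by
    rw [hhat_def, hV2 x hx]; ring
  have hhbot : Tendsto hhat atBot (nhds (-c_b)) := tendsto_atBot_of_eqOn_Iic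
    (by simpa using ((hP.tendsto_left_atBot.const_mul _).sub tendsto_exp_atBot).sub_const c_b) hlo
  have hΦ : Differentiable ℝ (hhat / G) :=
    (differentiable_of_smoothFit (hg.differentiable (by simp)) (deriv_smoothFit_eq_zero
      (hP.differentiable_left _) (hP.pos_left bstar).ne' hb) hlo hhi).div
      hP.differentiable_right hG0
  have hT := fun z (hz : 0 < z) => hP.contDiffAt_inverse hinv_right hz
  have hHd : ∀ z, 0 < z → DifferentiableAt ℝ Hhat z := fun z hz =>
    differentiableAt_of_forall_pos_eq_comp hHhat hz (hΦ _) ((hT z hz).differentiableAt (by simp))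
  refine ⟨continuousOn_Ici_zero_of_forall_pos hHhat hHhat0 (hhbot.div_atTop hP.tendsto_right_atBot)
    (hP.strictMono_div.tendsto_inverse_nhdsGT_zero hP.pos_div hinv_right)
    fun z hz => (hHd z hz).continuousAt, hHd, fun z hz hne => ?_, hHhat0,
    (strictAntiOn_div_of_eqOn_Ici (by linarith) hP.strictAnti_right hP.pos_right hhi).comp_inverse
      hP.strictMono_div (hP.pos_div _) hinv_right hHhat, fun _ => ?_⟩
  · have hzb : ψinv z ≠ bstar := fun h => hne (h ▸ (hinv_right z hz).symm)
    exact differentiableAt_deriv_of_forall_pos_eq_comp hHhat hz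
      ((contDiffAt_of_eqOn_Iic_of_eqOn_Ici hg hlo hhi hzb).div hP.contDiff_right.contDiffAt (hG0 _))
      (hT z hz) (by norm_cast)
  · exact exists_forall_neg_of_comp_inverse hP.strictMono_div hP.pos_div hinv_right hHhat
      ((hhbot.eventually (gt_mem_nhds (neg_neg_of_pos hcb))).mono fun x hx =>
        div_neg_of_neg_of_pos hx (hP.pos_right x))
      fun x hx => div_neg_of_neg_of_pos (by rw [hhi hx]; linarith) (hP.pos_right x)

/-- Ĥ is continuous on [0, ∞), differentiable on (0, ∞), twice
differentiable on (0, ψ(b*)) ∪ (ψ(b*), ∞); Ĥ(0) = 0; Ĥ is strictly decreasing on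
[ψ(b*), ∞); and if sup ĥ > 0 then there is b̲ < b* with Ĥ < 0 on
(0, ψ(b̲)) ∪ [ψ(b*), ∞). -/
theorem stmt14
    (μ σ θ r c_s c_b : ℝ)
    (hμ : 0 < μ) (hσ : 0 < σ) (hr : 0 < r) (hcs : 0 < c_s) (hcb : 0 < c_b)
    (F G : ℝ → ℝ)
    (hF : ∀ x : ℝ, F x = ∫ u in Ioi (0:ℝ),
        u ^ (r / μ - 1) * Real.exp (Real.sqrt (2 * μ / σ ^ 2) * (x - θ) * u - u ^ 2 / 2))
    (hG : ∀ x : ℝ, G x = ∫ u in Ioi (0:ℝ),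
        u ^ (r / μ - 1) * Real.exp (Real.sqrt (2 * μ / σ ^ 2) * (θ - x) * u - u ^ 2 / 2))
    (ψ : ℝ → ℝ) (hψ : ∀ x, ψ x = F x / G x)
    (ψinv : ℝ → ℝ)
    (hinv_left : ∀ x : ℝ, ψinv (ψ x) = x)
    (hinv_right : ∀ z : ℝ, 0 < z → ψ (ψinv z) = z)
    (bstar : ℝ)
    (hb : Real.exp bstar * F bstar = (Real.exp bstar - c_s) * deriv F bstar)
    (hb_uniq : ∀ b', Real.exp b' * F b' = (Real.exp b' - c_s) * deriv F b' → b' = bstar)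
    (V : ℝ → ℝ)
    (hV1 : ∀ x : ℝ, x < bstar → V x = (Real.exp bstar - c_s) / F bstar * F x)
    (hV2 : ∀ x : ℝ, bstar ≤ x → V x = Real.exp x - c_s)
    (hhat : ℝ → ℝ)
    (hhat_def : ∀ x : ℝ, hhat x = V x - Real.exp x - c_b)
    (Hhat : ℝ → ℝ)
    (hHhat : ∀ z : ℝ, 0 < z → Hhat z = hhat (ψinv z) / G (ψinv z))
    (hHhat0 : Hhat 0 = 0) :
    ContinuousOn Hhat (Ici (0:ℝ)) ∧
    (∀ z : ℝ, 0 < z → DifferentiableAt ℝ Hhat z) ∧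
    (∀ z : ℝ, 0 < z → z ≠ ψ bstar → DifferentiableAt ℝ (deriv Hhat) z) ∧
    Hhat 0 = 0 ∧
    StrictAntiOn Hhat (Ici (ψ bstar)) ∧
    ((∃ x, 0 < hhat x) →
      ∃ bb : ℝ, bb < bstar ∧
        ∀ z : ℝ, ((0 < z ∧ z < ψ bb) ∨ ψ bstar ≤ z) → Hhat z < 0) :=
  stmt14_general μ σ θ r c_s c_b hμ hσ hr hcs hcb F G hF hG ψ hψ ψinv hinv_right bstar hb V hV1 hV2
    hhat hhat_def Hhat hHhat hHhat0
end
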